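/- arXiv:2405.07345 — 3 statements merged into one kernel-verified Lean document; each statement's English description precedes it below -/
import Mathlib

section
/- Let E be the edge set of a graph G, let P be a probability measure on {0,1}^E (with the product σ-algebra), and let k ≥ 0. Then the following are equivalent: (i) P is positively associated and k-independent; (ii) for every F ⊆ E, every F-increasing event A supported on F, and every cl_k(F)-increasing event B, one has P[A ∩ B] ≥ P[A]·P[B]. -/
open MeasureTheory Filter
open scoped ENNReal Classical

noncomputable section

namespace PercFormal

/-! ### Generic percolation configurations on an index type `ι` -/

variable {ι : Type*} {V : Type*}

/-- An event is increasing if it is closed under pointwise enlargement of the configuration. -/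
def IncreasingEvent (A : Set (ι → Bool)) : Prop :=
  ∀ ⦃ω ω' : ι → Bool⦄, ω ∈ A → ω ≤ ω' → ω' ∈ A

/-- Positive association (FKG): increasing events are positively correlated. -/
def PositivelyAssociated (P : Measure (ι → Bool)) : Prop :=
  ∀ A B : Set (ι → Bool), MeasurableSet A → MeasurableSet B →
    IncreasingEvent A → IncreasingEvent B → P A * P B ≤ P (A ∩ B)

/-- An event is supported on `F` if it is measurable and depends only on coordinates in `F`. -/
def SupportedOn (A : Set (ι → Bool)) (F : Set ι) : Prop :=
  MeasurableSet A ∧ ∀ ⦃ω ω' : ι → Bool⦄, (∀ e ∈ F, ω e = ω' e) → ω ∈ A → ω' ∈ A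

/-- The coordinates in `F₁` are independent of the coordinates in `F₂` under `P`. -/
def IndepOn (P : Measure (ι → Bool)) (F₁ F₂ : Set ι) : Prop :=
  ∀ A B : Set (ι → Bool), SupportedOn A F₁ → SupportedOn B F₂ → P (A ∩ B) = P A * P B

/-- `P` is the product (i.i.d.) Bernoulli measure with parameter `p`: a probability measure
with marginals `p` under which disjoint coordinate sets are independent. -/
def IsProductBernoulli (P : Measure (ι → Bool)) (p : ℝ) : Prop :=
  IsProbabilityMeasure P ∧ (∀ i : ι, P {ω | ω i = true} = ENNReal.ofReal p) ∧
    ∀ F₁ F₂ : Set ι, Disjoint F₁ F₂ → IndepOn P F₁ F₂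

/-- Stochastic domination `μ ≪ ν` for measures on `{0,1}^ι`. -/
def StochDom (μ ν : Measure (ι → Bool)) : Prop :=
  ∀ A : Set (ι → Bool), MeasurableSet A → IncreasingEvent A → μ A ≤ ν A

/-- `A` is an `F`-increasing event: raising coordinates inside `F` (while keeping
the configuration unchanged outside `F`) preserves membership in `A`. -/
def FIncreasing (F : Set ι) (A : Set (ι → Bool)) : Prop :=
  ∀ ⦃ω ω' : ι → Bool⦄, ω ∈ A → (∀ e ∈ F, ω e ≤ ω' e) → (∀ e, e ∉ F → ω e = ω' e) → ω' ∈ A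

/-! ### Bond percolation on undirected simple graphs -/

/-- Two sets of edges are at graph distance at least `k`: every walk between an endpoint of
an edge of `F₁` and an endpoint of an edge of `F₂` has length at least `k`. -/
def edgeDistGE (G : SimpleGraph V) (k : ℕ) (F₁ F₂ : Set G.edgeSet) : Prop :=
  ∀ e₁ ∈ F₁, ∀ e₂ ∈ F₂, ∀ u v : V, u ∈ (e₁ : Sym2 V) → v ∈ (e₂ : Sym2 V) →
    ∀ w : G.Walk u v, k ≤ w.length

/-- `k`-independence: edge statuses on disjoint edge sets at distance at least `k`
are independent. -/
def KIndependent (G : SimpleGraph V) (P : Measure (G.edgeSet → Bool)) (k : ℕ) : Prop :=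
  ∀ F₁ F₂ : Set G.edgeSet, Disjoint F₁ F₂ → edgeDistGE G k F₁ F₂ → IndepOn P F₁ F₂

/-- `u` and `v` are joined by an open edge in the configuration `ω`. -/
def openAdj (G : SimpleGraph V) (ω : G.edgeSet → Bool) (u v : V) : Prop :=
  ∃ h : G.Adj u v, ω ⟨s(u, v), (G.mem_edgeSet).mpr h⟩ = true

/-- The open cluster of a vertex `v`. -/
def cluster (G : SimpleGraph V) (ω : G.edgeSet → Bool) (v : V) : Set V :=
  {u | Relation.ReflTransGen (openAdj G ω) v u}

/-- `P` percolates: with positive probability there is an infinite open cluster. -/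
def Percolates (G : SimpleGraph V) (P : Measure (G.edgeSet → Bool)) : Prop :=
  0 < P {ω | ∃ v : V, (cluster G ω v).Infinite}

/-- `P` belongs to the class `𝒫ₐ(G,p)`: a positively associated, `1`-independent bond
percolation model with all marginals at least `p`. -/
def ClassPA (G : SimpleGraph V) (p : ℝ) (P : Measure (G.edgeSet → Bool)) : Prop :=
  IsProbabilityMeasure P ∧ PositivelyAssociated P ∧ KIndependent G P 1 ∧
    ∀ e : G.edgeSet, ENNReal.ofReal p ≤ P {ω | ω e = true}

/-- `p_a⁺(G)`. -/
def pAPlus (G : SimpleGraph V) : ℝ :=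
  sSup {p : ℝ | p ∈ Set.Icc 0 1 ∧
    ∃ P : Measure (G.edgeSet → Bool), ClassPA G p P ∧ ¬ Percolates G P}

/-- The critical probability of Bernoulli bond percolation on `G`. -/
def pC (G : SimpleGraph V) : ℝ :=
  sSup {p : ℝ | p ∈ Set.Icc 0 1 ∧
    ∃ P : Measure (G.edgeSet → Bool), IsProductBernoulli P p ∧ ¬ Percolates G P}

/-- `p⁻(G)`: below this value, no `1`-independent model with marginals `p` percolates. -/
def pMinus (G : SimpleGraph V) : ℝ :=
  sSup {q : ℝ | q ∈ Set.Icc 0 1 ∧ ∀ p : ℝ, 0 ≤ p → p < q →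
    ∀ P : Measure (G.edgeSet → Bool), IsProbabilityMeasure P → KIndependent G P 1 →
      (∀ e : G.edgeSet, P {ω | ω e = true} = ENNReal.ofReal p) → ¬ Percolates G P}

/-- `p_a⁻(G)`: the analogue of `p⁻(G)` for positively associated models. -/
def pAMinus (G : SimpleGraph V) : ℝ :=
  sSup {q : ℝ | q ∈ Set.Icc 0 1 ∧ ∀ p : ℝ, 0 ≤ p → p < q →
    ∀ P : Measure (G.edgeSet → Bool), IsProbabilityMeasure P → PositivelyAssociated P →
      KIndependent G P 1 →
      (∀ e : G.edgeSet, P {ω | ω e = true} = ENNReal.ofReal p) → ¬ Percolates G P}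

/-! ### Site percolation on undirected graphs -/

/-- One open step of site percolation: `u` and `v` adjacent and both open. -/
def siteAdjOpen (G : SimpleGraph V) (σ : V → Bool) (u v : V) : Prop :=
  G.Adj u v ∧ σ u = true ∧ σ v = true

/-- A site percolation model percolates if with positive probability there is an infinite
connected set of open vertices. -/
def PercolatesSite (G : SimpleGraph V) (P : Measure (V → Bool)) : Prop :=
  0 < P {σ | ∃ v : V, σ v = true ∧ {u | Relation.ReflTransGen (siteAdjOpen G σ) v u}.Infinite}

/-- The critical probability of Bernoulli site percolation on `G`. -/
def pCSite (G : SimpleGraph V) : ℝ :=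
  sSup {p : ℝ | p ∈ Set.Icc 0 1 ∧
    ∃ P : Measure (V → Bool), IsProductBernoulli P p ∧ ¬ PercolatesSite G P}

/-! ### Branching number of a tree -/

/-- A unit flow on `G` from the root `o` (children of `v` = neighbours one step further
from the root). -/
def IsUnitFlow (G : SimpleGraph V) (o : V) (θ : V → ℝ≥0∞) : Prop :=
  θ o = 1 ∧ ∀ v : V,
    θ v = ∑' w : {w : V // G.Adj v w ∧ G.dist o w = G.dist o v + 1}, θ w.1

/-- The branching number `br(T)` of a rooted tree, via unit flows. -/
def branchingNumber (G : SimpleGraph V) (o : V) : ℝ≥0∞ :=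
  ⨆ (θ : V → ℝ≥0∞) (_ : IsUnitFlow G o θ),
    Filter.liminf (fun v : V => θ v ^ (-(1 : ℝ) / (G.dist o v : ℝ)))
      (Filter.comap (fun v : V => G.dist o v) Filter.atTop)

/-! ### Bond percolation on directed graphs -/

/-- The directed edges of the directed graph given by the relation `D`. -/
abbrev DirEdge (D : V → V → Prop) : Type _ := {e : V × V // D e.1 e.2}

/-- One open directed step. -/
def dirOpenRel (D : V → V → Prop) (ω : DirEdge D → Bool) (u v : V) : Prop :=
  ∃ h : D u v, ω ⟨(u, v), h⟩ = true

/-- The set of vertices reachable from `U` by directed open paths. -/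
def dirClusterSet (D : V → V → Prop) (ω : DirEdge D → Bool) (U : Set V) : Set V :=
  {v | ∃ u ∈ U, Relation.ReflTransGen (dirOpenRel D ω) u v}

/-- A directed bond percolation model percolates if with positive probability some directed
cluster is infinite. -/
def PercolatesDir (D : V → V → Prop) (P : Measure (DirEdge D → Bool)) : Prop :=
  0 < P {ω | ∃ v : V, (dirClusterSet D ω {v}).Infinite}

/-- Two sets of directed edges are at distance at least `1` in the underlying undirected
graph, i.e. they share no endpoint. -/
def dirEdgeDistGE1 (D : V → V → Prop) (F₁ F₂ : Set (DirEdge D)) : Prop :=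
  ∀ e₁ ∈ F₁, ∀ e₂ ∈ F₂,
    e₁.1.1 ≠ e₂.1.1 ∧ e₁.1.1 ≠ e₂.1.2 ∧ e₁.1.2 ≠ e₂.1.1 ∧ e₁.1.2 ≠ e₂.1.2

/-- `1`-independence for directed bond percolation models. -/
def OneIndependentDir (D : V → V → Prop) (P : Measure (DirEdge D → Bool)) : Prop :=
  ∀ F₁ F₂ : Set (DirEdge D), dirEdgeDistGE1 D F₁ F₂ → IndepOn P F₁ F₂

/-- The class `𝒫ₐ(G,p)` for directed graphs. -/
def ClassPADir (D : V → V → Prop) (p : ℝ) (P : Measure (DirEdge D → Bool)) : Prop :=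
  IsProbabilityMeasure P ∧ PositivelyAssociated P ∧ OneIndependentDir D P ∧
    ∀ e : DirEdge D, ENNReal.ofReal p ≤ P {ω | ω e = true}

/-- `p_a⁺(G)` for directed graphs. -/
def pAPlusDir (D : V → V → Prop) : ℝ :=
  sSup {p : ℝ | p ∈ Set.Icc 0 1 ∧
    ∃ P : Measure (DirEdge D → Bool), ClassPADir D p P ∧ ¬ PercolatesDir D P}

/-! ### Site percolation on directed graphs -/

/-- One open directed step of site percolation. -/
def dirSiteOpenRel (D : V → V → Prop) (σ : V → Bool) (u v : V) : Prop :=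
  D u v ∧ σ u = true ∧ σ v = true

/-- A directed site percolation model percolates if with positive probability some vertex
reaches infinitely many vertices by directed open paths. -/
def PercolatesSiteDir (D : V → V → Prop) (P : Measure (V → Bool)) : Prop :=
  0 < P {σ | ∃ v : V, {u | Relation.ReflTransGen (dirSiteOpenRel D σ) v u}.Infinite}

/-- The critical probability of Bernoulli site percolation on a directed graph. -/
def pCSiteDir (D : V → V → Prop) : ℝ :=
  sSup {p : ℝ | p ∈ Set.Icc 0 1 ∧
    ∃ P : Measure (V → Bool), IsProductBernoulli P p ∧ ¬ PercolatesSiteDir D P}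

/-! ### The lattices `ℤⁿ`, `ℤ⃗ⁿ`, `ℤ²`, `ℤ⃗²` and the truncated square lattice -/

/-- The directed nearest-neighbour relation on `ℤⁿ`: increase one coordinate by `1`. -/
def dirAdjN (n : ℕ) (x y : Fin n → ℤ) : Prop :=
  ∃ i, y i = x i + 1 ∧ ∀ j, j ≠ i → y j = x j

/-- The hypercubic lattice `ℤⁿ`. -/
def ZLat (n : ℕ) : SimpleGraph (Fin n → ℤ) := SimpleGraph.fromRel (dirAdjN n)

/-- The directed nearest-neighbour relation on `ℤ²`. -/
def dirAdj2 (u v : ℤ × ℤ) : Prop :=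
  v = (u.1 + 1, u.2) ∨ v = (u.1, u.2 + 1)

/-- The square lattice `ℤ²`. -/
def Z2 : SimpleGraph (ℤ × ℤ) := SimpleGraph.fromRel dirAdj2

/-- Adjacency generating the truncated square lattice `(4,8,8)`: each vertex of `ℤ²` is
replaced by a 4-cycle (directions `0 = east, 1 = north, 2 = west, 3 = south`), and
east/north vertices are joined to the west/south vertices of the neighbouring squares. -/
def truncAdj (a b : (ℤ × ℤ) × Fin 4) : Prop :=
  (a.1 = b.1 ∧ b.2 = a.2 + 1) ∨
  (a.2 = 0 ∧ b.2 = 2 ∧ b.1 = (a.1.1 + 1, a.1.2)) ∨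
  (a.2 = 1 ∧ b.2 = 3 ∧ b.1 = (a.1.1, a.1.2 + 1))

/-- The truncated square lattice `𝕋`. -/
def TruncSq : SimpleGraph ((ℤ × ℤ) × Fin 4) := SimpleGraph.fromRel truncAdj

/-! ### Strict level structures and levelwise independent versions -/

/-- A strict level structure: a partition of the vertices into levels such that every
directed edge goes from some level `i` to level `i+1`. -/
def IsStrictLevelStructure (D : V → V → Prop) (L : ℤ → Set V) : Prop :=
  (∀ v : V, ∃! i : ℤ, v ∈ L i) ∧ ∀ u v : V, D u v → ∀ i : ℤ, u ∈ L i → v ∈ L (i + 1)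

/-- The edges from level `i-1` to level `i`. -/
def levelEdges (D : V → V → Prop) (L : ℤ → Set V) (i : ℤ) : Set (DirEdge D) :=
  {e | e.1.1 ∈ L (i - 1) ∧ e.1.2 ∈ L i}

/-- `Q` is the levelwise independent version of `P` (w.r.t. the level structure `L`):
it has the same law as `P` on each level of edges, and the levels are independent. -/
def IsLevelwiseVersion (D : V → V → Prop) (L : ℤ → Set V)
    (P Q : Measure (DirEdge D → Bool)) : Prop :=
  IsProbabilityMeasure Q ∧
  (∀ (i : ℤ) (A : Set (DirEdge D → Bool)), SupportedOn A (levelEdges D L i) → Q A = P A) ∧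
  (∀ (s : Finset ℤ) (A : ℤ → Set (DirEdge D → Bool)),
      (∀ i ∈ s, SupportedOn (A i) (levelEdges D L i)) →
      Q (⋂ i ∈ s, A i) = ∏ i ∈ s, Q (A i))

/-- The diagonal levels of `ℤ²`. -/
def levelZ2 (i : ℤ) : Set (ℤ × ℤ) := {v | v.1 + v.2 = i}

/-! ### The comparison Markov chain `(𝒳_i)` on `ℤ⃗²` -/

instance : MeasurableSpace (Finset (ℤ × ℤ)) := ⊤

/-- The two outward steps in `ℤ⃗²`. -/
def out1 (v : ℤ × ℤ) : ℤ × ℤ := (v.1 + 1, v.2)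

def out2 (v : ℤ × ℤ) : ℤ × ℤ := (v.1, v.2 + 1)

/-- Candidate out-neighbours (out-neighbourhood in the full lattice `ℤ⃗²`). -/
def outCand (W : Finset (ℤ × ℤ)) : Finset (ℤ × ℤ) := W.image out1 ∪ W.image out2

/-- The out-neighbourhood `N₊(W)` of `W` in the subgraph of `ℤ⃗²` given by `D`. -/
def NplusF (D : ℤ × ℤ → ℤ × ℤ → Prop) (W : Finset (ℤ × ℤ)) : Finset (ℤ × ℤ) :=
  (outCand W).filter (fun v => ∃ u ∈ W, D u v)

/-- The maximal interval (run) of `W` containing `u`: all `v ∈ W` on the same diagonal as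
`u` such that every lattice point between `u` and `v` on that diagonal lies in `W`. -/
def run (W : Finset (ℤ × ℤ)) (u : ℤ × ℤ) : Finset (ℤ × ℤ) :=
  W.filter (fun v => v.1 + v.2 = u.1 + u.2 ∧
    ∀ x : ℤ, min u.1 v.1 ≤ x → x ≤ max u.1 v.1 → (x, u.1 + u.2 - x) ∈ W)

/-- The rightmost element of the (full) out-neighbourhood of an interval `R`, as a
singleton finset; for an interval `{(x+j,y−j) : 1 ≤ j ≤ ℓ}` this is `{(x+ℓ+1, y−ℓ)}`. -/
def rightmostOut (R : Finset (ℤ × ℤ)) : Finset (ℤ × ℤ) :=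
  (outCand R).filter (fun v => ∀ w ∈ outCand R, w.1 ≤ v.1)

/-- The transition weight of a single maximal interval `R` to `S ⊆ N₊(R)`. -/
def intervalWeight (D : ℤ × ℤ → ℤ × ℤ → Prop) (p : ℝ) (R S : Finset (ℤ × ℤ)) : ℝ :=
  if (NplusF D R).card = R.card + 1 then
    if S = ∅ then (1 - p) ^ R.card
    else if S = rightmostOut R then 0
    else p ^ S.card * (1 - p) ^ ((NplusF D R).card - S.card)
  else p ^ S.card * (1 - p) ^ ((NplusF D R).card - S.card)

/-- The transition probability `p_X(W, W')` of the Markov chain `(𝒳_i)`. -/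
def pX (D : ℤ × ℤ → ℤ × ℤ → Prop) (p : ℝ) (W W' : Finset (ℤ × ℤ)) : ℝ :=
  if W' ⊆ NplusF D W then
    ∏ R ∈ W.image (run W), intervalWeight D p R (NplusF D R ∩ W')
  else 0

/-- `ν` is the law of the Markov chain `(𝒳_i)_{i ≥ 0}` with initial state `U` and
transition probability `p_X` (with parameter `p`). -/
def IsChainLaw (D : ℤ × ℤ → ℤ × ℤ → Prop) (p : ℝ) (U : Finset (ℤ × ℤ))
    (ν : Measure (ℕ → Finset (ℤ × ℤ))) : Prop :=
  IsProbabilityMeasure ν ∧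
  ∀ (n : ℕ) (W : ℕ → Finset (ℤ × ℤ)),
    ν {X | ∀ j ≤ n, X j = W j} =
      (if W 0 = U then 1 else 0) *
        ENNReal.ofReal (∏ j ∈ Finset.range n, pX D p (W j) (W (j + 1)))

/-- `π` is the model `π_{p,p}` on `ℤ⃗²`: the edge `(u,v)` is open iff `Z⁺(u) = Z⁻(v) = 1`,
where all `Z⁺(w), Z⁻(w)` are i.i.d. Bernoulli(`p`). -/
def IsPiPP (p : ℝ) (π : Measure (DirEdge dirAdj2 → Bool)) : Prop :=
  ∃ ν : Measure ((ℤ × ℤ) ⊕ (ℤ × ℤ) → Bool), IsProductBernoulli ν p ∧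
    π = ν.map (fun Z (e : DirEdge dirAdj2) => Z (Sum.inl e.1.1) && Z (Sum.inr e.1.2))

end PercFormal

namespace PercFormal

/-- The `k`-closure `cl_k(F)` of a set of edges: for `k ≥ 1`, all edges at distance
less than `k` from `F`; for `k = 0`, `F` itself. -/
def clk {V : Type*} (G : SimpleGraph V) (k : ℕ) (F : Set G.edgeSet) : Set G.edgeSet :=
  if k = 0 then F
  else {e | ∃ f ∈ F, ∃ u v : V, u ∈ (e : Sym2 V) ∧ v ∈ (f : Sym2 V) ∧
    ∃ w : G.Walk u v, w.length < k}

end PercFormal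

/-
With `S = cl_k(F)`, an increasing event `A` supported on `F` is, by `k`-independence, independent
of the coordinates outside `S`. If an `S`-increasing event `B` depends on finitely many
coordinates, then on each fibre of its coordinates outside `S` it is an increasing event
intersected with a decreasing event supported outside `S`; for such events positive association
and independence combine to give `P[A ∩ B] ≥ P[A] P[B]`. A general `B` is approximated from inside
by a closed set depending on countably many coordinates; its `S`-increasing hull is still closed
and contained in `B`, and a closed set is the decreasing limit of its finite-dimensional shadows.

Conversely, `F = E` gives positive association. For `k`-independence, an event supported on `F₂`
and its complement are `cl_k(F₁)`-increasing, which gives independence from every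
`F₁`-increasing event supported on `F₁`; these form a π-system generating the coordinates in `F₁`.
-/

open MeasureTheory ProbabilityTheory Filter Set PercFormal

namespace PercFormal

variable {ι : Type*}

section Events

variable {A B : Set (ι → Bool)} {F S T : Set ι}

theorem dependsOn_mem_of_imp (hA : ∀ ⦃x y : ι → Bool⦄, (∀ e ∈ F, x e = y e) → x ∈ A → y ∈ A) :
    DependsOn (· ∈ A) F :=
  fun _ _ h ↦ propext ⟨hA h, hA fun e he ↦ (h e he).symm⟩

theorem SupportedOn.dependsOn (hA : SupportedOn A F) : DependsOn (· ∈ A) F :=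
  dependsOn_mem_of_imp hA.2

theorem supportedOn_of_dependsOn (hm : MeasurableSet A) (hA : DependsOn (· ∈ A) F) :
    SupportedOn A F :=
  ⟨hm, fun _ _ h hx ↦ (hA h).mp hx⟩

theorem supportedOn_univ (hA : MeasurableSet A) : SupportedOn A univ :=
  supportedOn_of_dependsOn hA (dependsOn_univ _)

theorem measurableSet_of_dependsOn_finite {s : Set ι} (hs : s.Finite) (hA : DependsOn (· ∈ A) s) :
    MeasurableSet A := by
  have hA_eq : A = hs.toFinset.restrict ⁻¹' (hs.toFinset.restrict '' A) := by
    refine (subset_preimage_image _ _).antisymm ?_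
    rintro x ⟨y, hy, hyx⟩
    exact (hA fun e he ↦ congrFun hyx ⟨e, hs.mem_toFinset.2 he⟩).mp hy
  rw [hA_eq]
  exact Finset.measurable_restrict _ (toFinite _).measurableSet

theorem exists_countable_dependsOn (hA : MeasurableSet A) :
    ∃ M : Set ι, M.Countable ∧ DependsOn (· ∈ A) M := by
  rw [MeasurableSpace.pi_eq_generateFrom_projections] at hA
  induction A, hA using MeasurableSpace.generateFrom_induction with
  | hC _ h _ =>
    obtain ⟨e, s, -, rfl⟩ := h
    exact ⟨{e}, countable_singleton e, fun x y hxy ↦ by simp [hxy e rfl]⟩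
  | empty => exact ⟨∅, countable_empty, fun _ _ _ ↦ rfl⟩
  | compl _ _ h =>
    obtain ⟨M, hM, hAM⟩ := h
    exact ⟨M, hM, fun x y hxy ↦ by simp [hAM hxy]⟩
  | iUnion A _ h =>
    choose M hM hAM using h
    refine ⟨⋃ n, M n, countable_iUnion hM, fun x y hxy ↦ ?_⟩
    simp only [mem_iUnion]
    exact propext <| exists_congr fun n ↦ (hAM n fun e he ↦ hxy e (mem_iUnion_of_mem n he)).to_iff

theorem IncreasingEvent.fIncreasing (hA : IncreasingEvent A) (F : Set ι) : FIncreasing F A := by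
  intro x y hx hle heq
  refine hA hx fun e ↦ ?_
  by_cases he : e ∈ F
  · exact hle e he
  · exact (heq e he).le

theorem FIncreasing.increasingEvent {W : Set ι} (hA : FIncreasing S A) (hWS : W ⊆ S)
    (hAW : DependsOn (· ∈ A) W) : IncreasingEvent A := by
  intro x y hx hxy
  have hz : S.piecewise y x ∈ A :=
    hA hx (fun e he ↦ by simpa [he] using hxy e) (fun e he ↦ by simp [he])
  exact (hAW fun e he ↦ by simp [hWS he]).mp hz

theorem SupportedOn.fIncreasing_of_disjoint (hA : SupportedOn A F) (hFT : Disjoint F T) :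
    FIncreasing T A :=
  fun _ _ hx _ heq ↦ hA.2 (fun e he ↦ heq e (hFT.notMem_of_mem_left he)) hx

theorem IncreasingEvent.union (hA : IncreasingEvent A) (hB : IncreasingEvent B) :
    IncreasingEvent (A ∪ B) := by
  rintro x y (hx | hx) hxy
  exacts [Or.inl (hA hx hxy), Or.inr (hB hx hxy)]

theorem SupportedOn.inter (hA : SupportedOn A F) (hB : SupportedOn B F) :
    SupportedOn (A ∩ B) F :=
  ⟨hA.1.inter hB.1, fun _ _ h hx ↦ ⟨hA.2 h hx.1, hB.2 h hx.2⟩⟩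

theorem SupportedOn.compl (hA : SupportedOn A F) : SupportedOn Aᶜ F :=
  ⟨hA.1.compl, fun _ _ h hx hy ↦ hx (hA.2 (fun e he ↦ (h e he).symm) hy)⟩

theorem FIncreasing.inter (hA : FIncreasing F A) (hB : FIncreasing F B) :
    FIncreasing F (A ∩ B) :=
  fun _ _ hx hle heq ↦ ⟨hA hx.1 hle heq, hB hx.2 hle heq⟩

theorem supportedOn_coord_eq_true {e : ι} (he : e ∈ F) :
    SupportedOn {x : ι → Bool | x e = true} F :=
  ⟨measurableSet_eq_fun (measurable_pi_apply e) measurable_const,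
    fun _ _ h hx ↦ (h e he).symm.trans hx⟩

theorem fIncreasing_coord_eq_true {e : ι} (he : e ∈ F) :
    FIncreasing F {x : ι → Bool | x e = true} :=
  fun _ _ hx hle _ ↦ le_antisymm (Bool.le_true _) (hx ▸ hle e he)

end Events

section Approximation

variable {S M : Set ι} {K : Set (ι → Bool)}

def upperHull (S M : Set ι) (K : Set (ι → Bool)) : Set (ι → Bool) :=
  {x | ∃ y ∈ K, (∀ e ∈ M ∩ S, y e ≤ x e) ∧ ∀ e ∈ M \ S, y e = x e}

theorem subset_upperHull : K ⊆ upperHull S M K :=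
  fun x hx ↦ ⟨x, hx, fun _ _ ↦ le_rfl, fun _ _ ↦ rfl⟩

theorem dependsOn_upperHull : DependsOn (· ∈ upperHull S M K) M := by
  refine dependsOn_mem_of_imp fun x x' hxx' ⟨y, hy, hle, heq⟩ ↦ ⟨y, hy, ?_, ?_⟩
  · exact fun e he ↦ (hle e he).trans_eq (hxx' e he.1)
  · exact fun e he ↦ (heq e he).trans (hxx' e he.1)

theorem fIncreasing_upperHull : FIncreasing S (upperHull S M K) := by
  rintro x x' ⟨y, hy, hle, heq⟩ hxx' hS
  exact ⟨y, hy, fun e he ↦ (hle e he).trans (hxx' e he.2),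
    fun e he ↦ (heq e he).trans (hS e he.2)⟩

theorem upperHull_subset {B : Set (ι → Bool)} (hKM : DependsOn (· ∈ K) M)
    (hB : FIncreasing S B) (hKB : K ⊆ B) : upperHull S M K ⊆ B := by
  rintro x ⟨y, hy, hle, heq⟩
  have hy' : M.piecewise y x ∈ K := (hKM fun e he ↦ by simp [he]).mp hy
  refine hB (hKB hy') (fun e heS ↦ ?_) (fun e heS ↦ ?_)
  · by_cases heM : e ∈ M
    · simpa [heM] using hle e ⟨heM, heS⟩
    · simp [heM]
  · by_cases heM : e ∈ M
    · simpa [heM] using heq e ⟨heM, heS⟩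
    · simp [heM]

/-- The hull is the projection of a closed subset of the compact space `(ι → Bool)²`. -/
theorem isClosed_upperHull (hK : IsClosed K) : IsClosed (upperHull S M K) := by
  let L : Set ((ι → Bool) × (ι → Bool)) :=
    Prod.fst ⁻¹' K ∩ (⋂ e ∈ M ∩ S, {p | p.1 e ≤ p.2 e}) ∩ ⋂ e ∈ M \ S, {p | p.1 e = p.2 e}
  have hL : IsClosed L := by
    refine ((hK.preimage continuous_fst).inter
      (isClosed_biInter fun e _ ↦ ?_)).inter (isClosed_biInter fun e _ ↦ ?_)
    · have hc : Continuous fun p : (ι → Bool) × (ι → Bool) ↦ (p.1 e, p.2 e) := by fun_prop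
      exact (isClosed_discrete {q : Bool × Bool | q.1 ≤ q.2}).preimage hc
    · exact isClosed_eq (by fun_prop) (by fun_prop)
  have hHull : upperHull S M K = Prod.snd '' L := by
    ext x
    simp only [upperHull, L, mem_image, mem_inter_iff, mem_preimage, mem_iInter,
      mem_ofPred_eq, Prod.exists, exists_eq_right]
    exact ⟨fun ⟨y, hy, hle, heq⟩ ↦ ⟨y, ⟨hy, hle⟩, heq⟩, fun ⟨y, ⟨hy, hle⟩, heq⟩ ↦ ⟨y, hy, hle, heq⟩⟩
  rw [hHull]
  exact (hL.isCompact.image continuous_snd).isClosed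

def shadow (s : Set ι) (K : Set (ι → Bool)) : Set (ι → Bool) :=
  {x | ∃ y ∈ K, ∀ e ∈ s, y e = x e}

theorem subset_shadow (s : Set ι) : K ⊆ shadow s K :=
  fun x hx ↦ ⟨x, hx, fun _ _ ↦ rfl⟩

theorem shadow_anti {s t : Set ι} (hst : s ⊆ t) : shadow t K ⊆ shadow s K :=
  fun _ ⟨y, hy, hyx⟩ ↦ ⟨y, hy, fun e he ↦ hyx e (hst he)⟩

theorem dependsOn_shadow (s : Set ι) : DependsOn (· ∈ shadow s K) s :=
  dependsOn_mem_of_imp fun _ _ hxx' ⟨y, hy, hyx⟩ ↦ ⟨y, hy, fun e he ↦ (hyx e he).trans (hxx' e he)⟩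

theorem FIncreasing.shadow (hK : FIncreasing S K) (s : Set ι) : FIncreasing S (shadow s K) := by
  rintro x x' ⟨y, hy, hyx⟩ hle heq
  refine ⟨s.piecewise x' y, hK hy (fun e he ↦ ?_) (fun e he ↦ ?_), fun e he ↦ by simp [he]⟩
  · by_cases hes : e ∈ s
    · simpa [hes, hyx e hes] using hle e he
    · simp [hes]
  · by_cases hes : e ∈ s
    · simpa [hes, hyx e hes] using heq e he
    · simp [hes]

theorem iInter_shadow_of_isClosed (hK : IsClosed K) (hKM : DependsOn (· ∈ K) M) :
    ⋂ J : Finset M, shadow (Subtype.val '' (J : Set M)) K = K := by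
  refine (subset_iInter fun J ↦ subset_shadow _).antisymm' fun x hx ↦ ?_
  choose y hyK hyx using mem_iInter.1 hx
  have hz : ∀ J, M.piecewise (y J) x ∈ K := fun J ↦ (hKM fun e he ↦ by simp [he]).mp (hyK J)
  refine hK.mem_of_tendsto (f := fun J ↦ M.piecewise (y J) x) (b := atTop)
    (tendsto_pi_nhds.2 fun e ↦ ?_) (Eventually.of_forall hz)
  by_cases he : e ∈ M
  · refine tendsto_const_nhds.congr' ?_
    filter_upwards [eventually_ge_atTop {⟨e, he⟩}] with J hJ
    simpa [he] using (hyx J e ⟨⟨e, he⟩, hJ (Finset.mem_singleton_self _), rfl⟩).symm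
  · exact tendsto_const_nhds.congr fun J ↦ by simp [he]

theorem exists_isClosed_subset_dependsOn (P : Measure (ι → Bool)) [IsFiniteMeasure P]
    {B : Set (ι → Bool)} (hB : MeasurableSet B) (hM : M.Countable) (hBM : DependsOn (· ∈ B) M)
    {ε : ℝ≥0∞} (hε : ε ≠ 0) :
    ∃ K ⊆ B, IsClosed K ∧ DependsOn (· ∈ K) M ∧ P (B \ K) < ε := by
  have := hM.to_subtype
  let π : (ι → Bool) → (M → Bool) := fun x e ↦ x e
  let extend : (M → Bool) → (ι → Bool) := fun y e ↦ if h : e ∈ M then y ⟨e, h⟩ else false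
  have hπ : Measurable π := measurable_pi_lambda _ fun e ↦ measurable_pi_apply _
  have hextend : Measurable extend := by
    refine measurable_pi_lambda _ fun e ↦ ?_
    by_cases h : e ∈ M
    · simpa [extend, h] using measurable_pi_apply _
    · simp [extend, h]
  have hB_eq : B = π ⁻¹' (extend ⁻¹' B) := by
    ext x
    exact (hBM fun e he ↦ by simp [π, extend, he]).to_iff
  obtain ⟨K', hK'B, hK', hlt⟩ := (hextend hB).exists_isClosed_sdiff_lt (μ := P.map π)
    (measure_ne_top _ _) hε
  refine ⟨π ⁻¹' K', ?_, hK'.preimage (continuous_pi fun e ↦ continuous_apply _), ?_, ?_⟩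
  · exact fun x hx ↦ hB_eq ▸ hK'B hx
  · exact fun x y hxy ↦ by simp only [mem_preimage, π, funext fun e : M ↦ hxy e e.2]
  · rwa [Measure.map_apply hπ ((hextend hB).diff hK'.measurableSet), preimage_sdiff,
      ← hB_eq] at hlt

end Approximation

section Correlation

theorem measure_inter_le_mul_of_mul_compl_le {Ω : Type*} [MeasurableSpace Ω] {P : Measure Ω}
    [IsProbabilityMeasure P] {A D : Set Ω} (hD : MeasurableSet D)
    (h : P A * P Dᶜ ≤ P (A ∩ Dᶜ)) : P (A ∩ D) ≤ P A * P D := by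
  refine ENNReal.le_of_add_le_add_right (measure_ne_top P (A ∩ Dᶜ)) ?_
  calc P (A ∩ D) + P (A ∩ Dᶜ) = P A * (P D + P Dᶜ) := by
        rw [← sdiff_eq, measure_inter_add_sdiff A hD, prob_add_prob_compl hD, mul_one]
    _ = P A * P D + P A * P Dᶜ := mul_add _ _ _
    _ ≤ P A * P D + P (A ∩ Dᶜ) := by gcongr

theorem measure_eq_sum_inter_fibre (P : Measure (ι → Bool)) (R : Finset ι) (X : Set (ι → Bool)) :
    P X = ∑ σ : R → Bool, P (R.restrict (π := fun _ ↦ Bool) ⁻¹' {σ} ∩ X) := by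
  have hfibre : ∀ σ ∈ (Finset.univ : Finset (R → Bool)),
      MeasurableSet (R.restrict (π := fun _ ↦ Bool) ⁻¹' {σ}) :=
    fun σ _ ↦ Finset.measurable_restrict R (measurableSet_singleton σ)
  rw [← Measure.restrict_apply_univ, ← preimage_univ (f := R.restrict), ← Finset.coe_univ,
    ← sum_measure_preimage_singleton _ hfibre]
  exact Finset.sum_congr rfl fun σ _ ↦ Measure.restrict_apply (hfibre σ (Finset.mem_univ σ))

variable {P : Measure (ι → Bool)} [IsProbabilityMeasure P] {S F : Set ι} {A : Set (ι → Bool)}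

/-- Independence from the coordinates outside `S` handles `C`, and positive association
handles the decreasing event `C \ V`. -/
theorem mul_measure_le_measure_inter_inter (hPA : PositivelyAssociated P)
    (hInd : IndepOn P F Sᶜ) (hA : SupportedOn A F) (hAinc : IncreasingEvent A)
    {V C : Set (ι → Bool)} (hV : MeasurableSet V) (hVinc : IncreasingEvent V)
    (hC : SupportedOn C Sᶜ) (hCdec : IncreasingEvent Cᶜ) :
    P A * P (V ∩ C) ≤ P (A ∩ (V ∩ C)) := by
  have hCV : P (A ∩ (C \ V)) ≤ P A * P (C \ V) := by
    refine measure_inter_le_mul_of_mul_compl_le (hC.1.diff hV)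
      (hPA _ _ hA.1 (hC.1.diff hV).compl hAinc ?_)
    rw [sdiff_eq, compl_inter, compl_compl]
    exact hCdec.union hVinc
  refine ENNReal.le_of_add_le_add_right
    (ENNReal.mul_ne_top (measure_ne_top P A) (measure_ne_top P (C \ V))) ?_
  calc P A * P (V ∩ C) + P A * P (C \ V) = P A * P C := by
        rw [← mul_add, inter_comm, measure_inter_add_sdiff C hV]
    _ = P (A ∩ C) := (hInd A C hA hC).symm
    _ = P (A ∩ (V ∩ C)) + P (A ∩ (C \ V)) := by
        rw [← measure_inter_add_sdiff (A ∩ C) hV, inter_assoc, inter_comm C V, inter_sdiff_assoc]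
    _ ≤ P (A ∩ (V ∩ C)) + P A * P (C \ V) := by gcongr

/-- Split `B` along the finitely many values of the coordinates in `s \ S`: on each fibre,
`B` is an increasing event intersected with a decreasing event supported off `S`. -/
theorem mul_measure_le_measure_inter_of_finite (hPA : PositivelyAssociated P)
    (hInd : IndepOn P F Sᶜ) (hA : SupportedOn A F) (hAinc : IncreasingEvent A)
    {B : Set (ι → Bool)} {s : Set ι} (hs : s.Finite) (hBs : DependsOn (· ∈ B) s)
    (hBS : FIncreasing S B) : P A * P B ≤ P (A ∩ B) := by
  set R : Finset ι := hs.toFinset.filter (· ∉ S)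
  have hR : ∀ e ∈ R, e ∈ s ∧ e ∉ S := fun e he ↦ by simpa [R] using he
  set fibre : (R → Bool) → Set (ι → Bool) := fun σ ↦ R.restrict (π := fun _ ↦ Bool) ⁻¹' {σ}
  have hpiece : ∀ σ, P A * P (fibre σ ∩ B) ≤ P (fibre σ ∩ (A ∩ B)) := by
    intro σ
    set Down : Set (ι → Bool) := {x | ∀ e : R, x e ≤ σ e}
    have hpiece_eq : fibre σ ∩ B = upperHull univ s (fibre σ ∩ B) ∩ Down := by
      ext x
      constructor
      · intro hx
        refine ⟨subset_upperHull hx, fun e ↦ ?_⟩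
        rw [← show R.restrict x = σ from hx.1]
        rfl
      · rintro ⟨⟨y, ⟨hy_fibre, hyB⟩, hle, -⟩, hx⟩
        have hyσ : ∀ e : R, y e = σ e := congrFun (show R.restrict y = σ from hy_fibre)
        have hxy : ∀ e ∈ R, x e = y e := fun e he ↦
          le_antisymm ((hx ⟨e, he⟩).trans_eq (hyσ ⟨e, he⟩).symm) (hle e ⟨(hR e he).1, trivial⟩)
        refine ⟨funext fun e ↦ (hxy e e.2).trans (hyσ e), upperHull_subset hBs hBS subset_rfl
          ⟨y, hyB, fun e he ↦ hle e ⟨he.1, trivial⟩, fun e he ↦ (hxy e ?_).symm⟩⟩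
        simpa [R] using he
    have hDownR : DependsOn (· ∈ Down) (R : Set ι) :=
      dependsOn_mem_of_imp fun x x' hxx' hx e ↦ hxx' e e.2 ▸ hx e
    have hDown : SupportedOn Down Sᶜ :=
      supportedOn_of_dependsOn (measurableSet_of_dependsOn_finite R.finite_toSet hDownR)
        (hDownR.mono fun e he ↦ (hR e he).2)
    have hDown_dec : IncreasingEvent Downᶜ :=
      fun x y hx hxy hy ↦ hx fun e ↦ (hxy e).trans (hy e)
    rw [inter_left_comm, hpiece_eq]
    exact mul_measure_le_measure_inter_inter hPA hInd hA hAinc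
      (measurableSet_of_dependsOn_finite hs dependsOn_upperHull)
      (fIncreasing_upperHull.increasingEvent (subset_univ s) dependsOn_upperHull) hDown hDown_dec
  rw [measure_eq_sum_inter_fibre P R B, measure_eq_sum_inter_fibre P R (A ∩ B), Finset.mul_sum]
  exact Finset.sum_le_sum fun σ _ ↦ hpiece σ

theorem mul_measure_le_measure_inter_of_isClosed (hPA : PositivelyAssociated P)
    (hInd : IndepOn P F Sᶜ) (hA : SupportedOn A F) (hAinc : IncreasingEvent A)
    {K : Set (ι → Bool)} {M : Set ι} (hK : IsClosed K) (hM : M.Countable)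
    (hKM : DependsOn (· ∈ K) M) (hKS : FIncreasing S K) : P A * P K ≤ P (A ∩ K) := by
  have := hM.to_subtype
  set K' : Finset M → Set (ι → Bool) := fun J ↦ shadow (Subtype.val '' (J : Set M)) K
  have hK'_finite : ∀ J, P A * P (K' J) ≤ P (A ∩ K' J) := fun J ↦
    mul_measure_le_measure_inter_of_finite hPA hInd hA hAinc (J.finite_toSet.image _)
      (dependsOn_shadow _) (hKS.shadow _)
  have hdir : Directed (· ⊇ ·) fun J ↦ A ∩ K' J := fun J₁ J₂ ↦ ⟨J₁ ∪ J₂,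
    inter_subset_inter_right _ (shadow_anti (image_mono (by simp))),
    inter_subset_inter_right _ (shadow_anti (image_mono (by simp)))⟩
  calc P A * P K ≤ ⨅ J, P (A ∩ K' J) := le_iInf fun J ↦ by
        refine le_trans ?_ (hK'_finite J)
        gcongr
        exact subset_shadow _
    _ = P (A ∩ K) := by
        rw [← hdir.measure_iInter (fun J ↦ (hA.1.inter (measurableSet_of_dependsOn_finite
          (J.finite_toSet.image _) (dependsOn_shadow _))).nullMeasurableSet)
          ⟨∅, measure_ne_top _ _⟩, ← inter_iInter, iInter_shadow_of_isClosed hK hKM]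

/-- Approximate `B` from inside by a closed set `K` depending on countably many coordinates
and replace `K` by its `S`-increasing hull, which is still closed and contained in `B`. -/
theorem mul_measure_le_measure_inter_of_fIncreasing (hPA : PositivelyAssociated P)
    (hInd : IndepOn P F Sᶜ) (hA : SupportedOn A F) (hAinc : IncreasingEvent A)
    {B : Set (ι → Bool)} (hB : MeasurableSet B) (hBS : FIncreasing S B) :
    P A * P B ≤ P (A ∩ B) := by
  obtain ⟨M, hM, hBM⟩ := exists_countable_dependsOn hB
  refine ENNReal.le_of_forall_pos_le_add fun ε hε _ ↦ ?_
  obtain ⟨K, hKB, hK, hKM, hBK⟩ :=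
    exists_isClosed_subset_dependsOn P hB hM hBM (ε := ε) (by simpa using hε.ne')
  have hH := mul_measure_le_measure_inter_of_isClosed hPA hInd hA hAinc (isClosed_upperHull hK)
    hM dependsOn_upperHull (fIncreasing_upperHull (S := S))
  have hHB : upperHull S M K ⊆ B := upperHull_subset hKM hBS hKB
  calc P A * P B ≤ P A * (P (upperHull S M K) + ε) := by
        gcongr
        calc P B ≤ P (upperHull S M K ∪ B \ K) :=
              measure_mono fun x hx ↦ (em (x ∈ K)).imp (fun h ↦ subset_upperHull h) (⟨hx, ·⟩)
          _ ≤ P (upperHull S M K) + ε := (measure_union_le _ _).trans (by gcongr)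
    _ ≤ P A * P (upperHull S M K) + ε := by
        rw [mul_add]
        gcongr
        exact mul_le_of_le_one_left' prob_le_one
    _ ≤ P (A ∩ B) + ε := by
        gcongr
        exact hH.trans (measure_mono (inter_subset_inter_right _ hHB))

end Correlation

section Independence

/-- The events `{x e = true}`, `e ∈ F₁`, are `F₁`-increasing and generate the σ-algebra of the
coordinates in `F₁`, so the π-system of `F₁`-increasing events supported on `F₁` generates it. -/
theorem indepOn_of_fIncreasing {P : Measure (ι → Bool)} [IsProbabilityMeasure P] {F₁ F₂ : Set ι}
    (h : ∀ C B, SupportedOn C F₁ → FIncreasing F₁ C → SupportedOn B F₂ →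
      P (C ∩ B) = P C * P B) :
    IndepOn P F₁ F₂ := by
  set p₁ := {C | SupportedOn C F₁ ∧ FIncreasing F₁ C}
  set p₂ := {B | SupportedOn B F₂}
  have hp₁ : IsPiSystem p₁ := fun C hC C' hC' _ ↦ ⟨hC.1.inter hC'.1, hC.2.inter hC'.2⟩
  have hp₂ : IsPiSystem p₂ := fun B hB B' hB' _ ↦ hB.inter hB'
  have hindep : Indep (MeasurableSpace.generateFrom p₁) (MeasurableSpace.generateFrom p₂) P :=
    IndepSets.indep' (fun C hC ↦ hC.1.1) (fun B hB ↦ hB.1) hp₁ hp₂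
      ((IndepSets_iff _ _ _).2 fun C B hC hB ↦ h C B hC.1 hC.2 hB)
  have hcoord : ∀ e ∈ F₁, Measurable[MeasurableSpace.generateFrom p₁] fun x : ι → Bool ↦ x e := by
    intro e he
    have htrue : MeasurableSet[MeasurableSpace.generateFrom p₁] {x : ι → Bool | x e = true} :=
      MeasurableSpace.measurableSet_generateFrom
        ⟨supportedOn_coord_eq_true he, fIncreasing_coord_eq_true he⟩
    refine @measurable_to_countable' Bool _ _ _ (MeasurableSpace.generateFrom p₁) _ fun b ↦ ?_
    cases b
    · convert htrue.compl using 1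
      ext
      simp
    · exact htrue
  let proj : (ι → Bool) → (ι → Bool) := fun x ↦ F₁.piecewise x fun _ ↦ false
  have hproj : Measurable[MeasurableSpace.generateFrom p₁] proj := by
    refine @measurable_pi_lambda _ ι (fun _ ↦ Bool) (MeasurableSpace.generateFrom p₁) _ _ fun e ↦ ?_
    by_cases he : e ∈ F₁
    · simpa [proj, he] using hcoord e he
    · simp [proj, he]
  intro A B hA hB
  have hA_eq : proj ⁻¹' A = A := by
    ext x
    exact (hA.dependsOn fun e he ↦ by simp [proj, he]).to_iff
  have hA₁ : MeasurableSet[MeasurableSpace.generateFrom p₁] A := hA_eq ▸ hproj hA.1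
  exact (Indep_iff _ _ _).1 hindep A B hA₁ (MeasurableSpace.measurableSet_generateFrom hB)

end Independence

section Graph

variable {V : Type*} (G : SimpleGraph V) (k : ℕ)

theorem subset_clk (F : Set G.edgeSet) : F ⊆ clk G k F := by
  intro e he
  rcases eq_or_ne k 0 with hk | hk
  · simpa [clk, hk] using he
  · simp only [clk, hk, if_false]
    obtain ⟨u, hu⟩ : ∃ u, u ∈ (e : Sym2 V) := ⟨_, Sym2.out_fst_mem _⟩
    exact ⟨e, he, u, u, hu, hu, .nil, Nat.pos_of_ne_zero hk⟩

theorem edgeDistGE_clk_compl (F : Set G.edgeSet) : edgeDistGE G k F (clk G k F)ᶜ := by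
  intro e₁ he₁ e₂ he₂ u v hu hv w
  by_contra! hlen
  refine he₂ ?_
  rw [clk, if_neg ((Nat.zero_le _).trans_lt hlen).ne']
  exact ⟨e₁, he₁, v, u, hv, hu, w.reverse, by simpa using hlen⟩

variable {G k}

theorem disjoint_clk_of_edgeDistGE {F₁ F₂ : Set G.edgeSet} (hdisj : Disjoint F₁ F₂)
    (hdist : edgeDistGE G k F₁ F₂) : Disjoint F₂ (clk G k F₁) := by
  rcases eq_or_ne k 0 with hk | hk
  · simpa [clk, hk] using hdisj.symm
  · refine disjoint_left.2 fun e he hcl ↦ ?_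
    simp only [clk, hk, if_false, mem_ofPred_eq] at hcl
    obtain ⟨f, hf, u, v, hu, hv, w, hw⟩ := hcl
    exact (hdist f hf e he v u hv hu w.reverse).not_gt (by simpa using hw)

end Graph

end PercFormal

/-- `P` is positively associated and `k`-independent iff for every
`F ⊆ E`, every `F`-increasing event `A` supported on `F`, and every `cl_k(F)`-increasing
event `B`, one has `P[A ∩ B] ≥ P[A]·P[B]`. -/
theorem positivelyAssociated_and_kIndependent_iff
    {V : Type*} (G : SimpleGraph V) (P : MeasureTheory.Measure (G.edgeSet → Bool))
    (hP : MeasureTheory.IsProbabilityMeasure P) (k : ℕ) :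
    (PercFormal.PositivelyAssociated P ∧ PercFormal.KIndependent G P k) ↔
      (∀ F : Set G.edgeSet, ∀ A : Set (G.edgeSet → Bool),
        PercFormal.SupportedOn A F → PercFormal.FIncreasing F A →
        ∀ B : Set (G.edgeSet → Bool), MeasurableSet B →
          PercFormal.FIncreasing (PercFormal.clk G k F) B →
          P A * P B ≤ P (A ∩ B)) := by
  constructor
  · rintro ⟨hPA, hKI⟩ F A hA hAF B hB hBF
    have hInd : IndepOn P F (clk G k F)ᶜ := hKI F _
      (disjoint_compl_right.mono_left (subset_clk G k F)) (edgeDistGE_clk_compl G k F)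
    exact mul_measure_le_measure_inter_of_fIncreasing hPA hInd hA
      (hAF.increasingEvent subset_rfl hA.dependsOn) hB hBF
  · intro h
    refine ⟨fun A B hA hB hAinc hBinc ↦ ?_, fun F₁ F₂ hdisj hdist ↦ ?_⟩
    · exact h univ A (supportedOn_univ hA) (hAinc.fIncreasing _) B hB (hBinc.fIncreasing _)
    refine indepOn_of_fIncreasing fun C B hC hCF hB ↦ ?_
    have hfar := disjoint_clk_of_edgeDistGE hdisj hdist
    exact le_antisymm
      (measure_inter_le_mul_of_mul_compl_le hB.1
        (h F₁ C hC hCF Bᶜ hB.1.compl (hB.compl.fIncreasing_of_disjoint hfar)))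
      (h F₁ C hC hCF B hB.1 (hB.fIncreasing_of_disjoint hfar))
end
end

section
/- For every p ∈ [0,1] and every n ≥ 1, there exists a 1-independent bond percolation model P on ℤ⃗ⁿ with all marginals equal to p such that for every i ≥ 0, P[|C⃗₀(ω) ∩ L_{2i}| > 0] ≤ (n(n+1)p²/2)^i. In particular, whenever p < √2/√(n(n+1)), this yields a model P in 𝒫(ℤ⃗ⁿ, p) that does not percolate. -/
open MeasureTheory Filter
open scoped ENNReal Classical

noncomputable section

namespace BernAux

open Set ProbabilityTheory


variable (p : ℝ)

def bstep (x : ℝ) : ℝ := if x < p then x / p else (x - p) / (1 - p)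

def bitSeq (k : ℕ) (x : ℝ) : Bool := decide ((bstep p)^[k] x < p)

lemma measurable_bstep : Measurable (bstep p) := by
  unfold bstep
  exact Measurable.ite measurableSet_Iio
    (measurable_id.div_const p) ((measurable_id.sub_const p).div_const (1 - p))

lemma measurable_bitSeq (k : ℕ) : Measurable (bitSeq p k) := by
  apply measurable_to_countable'
  intro b
  cases b
  · have : bitSeq p k ⁻¹' {false} = ((bstep p)^[k]) ⁻¹' (Set.Ici p) := by
      ext x; simp [bitSeq, not_lt]
    rw [this]
    exact ((measurable_bstep p).iterate k) measurableSet_Ici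
  · have : bitSeq p k ⁻¹' {true} = ((bstep p)^[k]) ⁻¹' (Set.Iio p) := by
      ext x; simp [bitSeq]
    rw [this]
    exact ((measurable_bstep p).iterate k) measurableSet_Iio

variable {p}

lemma step_true (hp0 : 0 ≤ p) (hp1 : p ≤ 1) (T : Set ℝ) :
    volume {x | x ∈ Ico (0:ℝ) 1 ∧ x < p ∧ bstep p x ∈ T}
      = ENNReal.ofReal p * volume (T ∩ Ico 0 1) := by
  rcases eq_or_lt_of_le hp0 with h0 | h0
  · have : {x | x ∈ Ico (0:ℝ) 1 ∧ x < p ∧ bstep p x ∈ T} = ∅ := by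
      ext x; simp only [Set.mem_setOf_eq, Set.mem_empty_iff_false, iff_false]
      rintro ⟨⟨hx0, _⟩, hxp, _⟩
      exact absurd (hxp.trans_le (le_of_eq h0.symm)) (not_lt.2 hx0)
    rw [this, ← h0]
    simp
  · have hset : {x | x ∈ Ico (0:ℝ) 1 ∧ x < p ∧ bstep p x ∈ T}
        = (fun x => p⁻¹ * x) ⁻¹' (T ∩ Ico 0 1) := by
      ext x
      simp only [Set.mem_setOf_eq, Set.mem_preimage, Set.mem_inter_iff, Set.mem_Ico]
      constructor
      · rintro ⟨⟨hx0, _⟩, hxp, hT⟩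
        have hb : bstep p x = p⁻¹ * x := by
          rw [bstep, if_pos hxp, div_eq_inv_mul]
        refine ⟨hb ▸ hT, by positivity, ?_⟩
        rw [inv_mul_lt_iff₀ h0, mul_one]; exact hxp
      · rintro ⟨hT, h0x, h1x⟩
        have hx0 : 0 ≤ x := (mul_nonneg_iff_of_pos_left (inv_pos.2 h0)).1 h0x
        have hxp : x < p := by
          have := (inv_mul_lt_iff₀ h0).1 h1x
          simpa using this
        have hb : bstep p x = p⁻¹ * x := by rw [bstep, if_pos hxp, div_eq_inv_mul]
        exact ⟨⟨hx0, hxp.trans_le hp1⟩, hxp, hb ▸ hT⟩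
    rw [hset, Real.volume_preimage_mul_left (inv_ne_zero h0.ne')]
    rw [inv_inv, abs_of_pos h0]

lemma step_false (hp0 : 0 ≤ p) (hp1 : p ≤ 1) (T : Set ℝ) :
    volume {x | x ∈ Ico (0:ℝ) 1 ∧ ¬ x < p ∧ bstep p x ∈ T}
      = ENNReal.ofReal (1 - p) * volume (T ∩ Ico 0 1) := by
  rcases eq_or_lt_of_le hp1 with h1 | h1
  · have : {x | x ∈ Ico (0:ℝ) 1 ∧ ¬ x < p ∧ bstep p x ∈ T} = ∅ := by
      ext x; simp only [Set.mem_setOf_eq, Set.mem_empty_iff_false, iff_false]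
      rintro ⟨⟨_, hx1⟩, hxp, _⟩
      exact hxp (h1 ▸ hx1)
    rw [this, h1]
    simp
  · have hq : (0:ℝ) < 1 - p := by linarith
    have hset : {x | x ∈ Ico (0:ℝ) 1 ∧ ¬ x < p ∧ bstep p x ∈ T}
        = (fun x => -p + x) ⁻¹' ((fun y => (1-p)⁻¹ * y) ⁻¹' (T ∩ Ico 0 1)) := by
      ext x
      simp only [Set.mem_setOf_eq, Set.mem_preimage, Set.mem_inter_iff, Set.mem_Ico]
      constructor
      · rintro ⟨⟨hx0, hx1⟩, hxp, hT⟩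
        have hb : bstep p x = (1-p)⁻¹ * (-p + x) := by
          rw [bstep, if_neg hxp, div_eq_inv_mul, neg_add_eq_sub]
        refine ⟨hb ▸ hT, ?_, ?_⟩
        · have hh : p ≤ x := not_lt.1 hxp
          have : (0:ℝ) ≤ -p + x := by linarith
          positivity
        · rw [inv_mul_lt_iff₀ hq, mul_one]; linarith
      · rintro ⟨hT, h0x, h1x⟩
        have hpx : p ≤ x := by
          have := (mul_nonneg_iff_of_pos_left (inv_pos.2 hq)).1 h0x
          linarith
        have hx1 : x < 1 := by
          have := (inv_mul_lt_iff₀ hq).1 h1x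
          linarith
        have hb : bstep p x = (1-p)⁻¹ * (-p + x) := by
          rw [bstep, if_neg (not_lt.2 hpx), div_eq_inv_mul, neg_add_eq_sub]
        exact ⟨⟨le_trans hp0 hpx, hx1⟩, not_lt.2 hpx, hb ▸ hT⟩
    rw [hset]
    rw [measure_preimage_add volume (-p) _]
    rw [Real.volume_preimage_mul_left (inv_ne_zero hq.ne')]
    rw [inv_inv, abs_of_pos hq]

lemma step_any (hp0 : 0 ≤ p) (hp1 : p ≤ 1) (T : Set ℝ) :
    volume {x | x ∈ Ico (0:ℝ) 1 ∧ bstep p x ∈ T} = volume (T ∩ Ico 0 1) := by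
  have hsplit : volume {x | x ∈ Ico (0:ℝ) 1 ∧ bstep p x ∈ T}
      = volume ({x | x ∈ Ico (0:ℝ) 1 ∧ bstep p x ∈ T} ∩ {x | x < p})
        + volume ({x | x ∈ Ico (0:ℝ) 1 ∧ bstep p x ∈ T} \ {x | x < p}) :=
    (measure_inter_add_diff _ measurableSet_Iio).symm
  have h1 : {x | x ∈ Ico (0:ℝ) 1 ∧ bstep p x ∈ T} ∩ {x | x < p}
      = {x | x ∈ Ico (0:ℝ) 1 ∧ x < p ∧ bstep p x ∈ T} := by
    ext x; simp only [Set.mem_inter_iff, Set.mem_setOf_eq]; tauto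
  have h2 : {x | x ∈ Ico (0:ℝ) 1 ∧ bstep p x ∈ T} \ {x | x < p}
      = {x | x ∈ Ico (0:ℝ) 1 ∧ ¬ x < p ∧ bstep p x ∈ T} := by
    ext x; simp only [Set.mem_diff, Set.mem_setOf_eq]; tauto
  rw [hsplit, h1, h2, step_true hp0 hp1 T, step_false hp0 hp1 T,
    ← add_mul, ← ENNReal.ofReal_add hp0 (by linarith), add_sub_cancel,
    ENNReal.ofReal_one, one_mul]

/-- The all-`true` cylinder formula over bits with indices in `t`. -/
lemma cylinder_formula (hp0 : 0 ≤ p) (hp1 : p ≤ 1) :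
    ∀ (m : ℕ) (t : Finset ℕ), (∀ k ∈ t, k < m) →
    volume {x | x ∈ Ico (0:ℝ) 1 ∧ ∀ k ∈ t, bitSeq p k x = true}
      = ENNReal.ofReal p ^ t.card := by
  intro m
  induction m with
  | zero =>
    intro t ht
    have : t = ∅ := Finset.eq_empty_of_forall_notMem (fun k hk => absurd (ht k hk) (by omega))
    subst this
    have : {x | x ∈ Ico (0:ℝ) 1 ∧ ∀ k ∈ (∅ : Finset ℕ), bitSeq p k x = true} = Ico (0:ℝ) 1 := by
      ext x; simp
    rw [this]
    simp [Real.volume_Ico]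
  | succ m ih =>
    intro t ht
    set t' : Finset ℕ := (t.erase 0).image (· - 1) with ht'def
    have ht'lt : ∀ k ∈ t', k < m := by
      intro k hk
      simp only [ht'def, Finset.mem_image, Finset.mem_erase] at hk
      obtain ⟨j, ⟨hj0, hjt⟩, rfl⟩ := hk
      have := ht j hjt
      omega
    have hT' : ∀ x : ℝ, ((∀ k ∈ t', bitSeq p k (bstep p x) = true) ↔
        (∀ k ∈ t.erase 0, bitSeq p k x = true)) := by
      intro x
      constructor
      · intro h k hk
        have hk0 : k ≠ 0 := (Finset.mem_erase.1 hk).1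
        have : k - 1 ∈ t' := Finset.mem_image_of_mem _ hk
        have := h _ this
        have hrw : bitSeq p k x = bitSeq p (k-1) (bstep p x) := by
          obtain ⟨j, rfl⟩ : ∃ j, k = j + 1 := ⟨k - 1, by omega⟩
          simp [bitSeq, Function.iterate_succ_apply]
          congr 1
        rw [hrw]; simpa using this
      · intro h k hk
        simp only [ht'def, Finset.mem_image, Finset.mem_erase] at hk
        obtain ⟨j, ⟨hj0, hjt⟩, rfl⟩ := hk
        have := h j (Finset.mem_erase.2 ⟨hj0, hjt⟩)
        obtain ⟨j', rfl⟩ : ∃ j', j = j' + 1 := ⟨j - 1, by omega⟩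
        simp only [bitSeq, Function.iterate_succ_apply] at this ⊢
        simpa using of_decide_eq_true this
    set T : Set ℝ := {y | ∀ k ∈ t', bitSeq p k y = true} with hTdef
    have hTcap : T ∩ Ico 0 1 = {x | x ∈ Ico (0:ℝ) 1 ∧ ∀ k ∈ t', bitSeq p k x = true} := by
      ext x; simp only [Set.mem_inter_iff, Set.mem_setOf_eq, hTdef]; tauto
    have hIH := ih t' ht'lt
    by_cases h0 : 0 ∈ t
    · have hset : {x | x ∈ Ico (0:ℝ) 1 ∧ ∀ k ∈ t, bitSeq p k x = true}
          = {x | x ∈ Ico (0:ℝ) 1 ∧ x < p ∧ bstep p x ∈ T} := by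
        ext x
        simp only [Set.mem_setOf_eq, hTdef]
        constructor
        · rintro ⟨hx, hall⟩
          have hb0 : x < p := by
            have := hall 0 h0
            simpa [bitSeq] using of_decide_eq_true this
          exact ⟨hx, hb0, (hT' x).2 (fun k hk => hall k (Finset.mem_of_mem_erase hk))⟩
        · rintro ⟨hx, hxp, hmem⟩
          refine ⟨hx, fun k hk => ?_⟩
          by_cases hk0 : k = 0
          · subst hk0; simp [bitSeq, hxp]
          · exact (hT' x).1 hmem k (Finset.mem_erase.2 ⟨hk0, hk⟩)
      rw [hset, step_true hp0 hp1 T, hTcap, hIH]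
      have hcard : t.card = t'.card + 1 := by
        have h1 : t'.card = (t.erase 0).card := by
          apply Finset.card_image_of_injOn
          intro a ha b hb hab
          have ha0 : a ≠ 0 := (Finset.mem_erase.1 ha).1
          have hb0 : b ≠ 0 := (Finset.mem_erase.1 hb).1
          have hab' : a - 1 = b - 1 := hab
          omega
        rw [h1, Finset.card_erase_of_mem h0]
        have : 0 < t.card := Finset.card_pos.2 ⟨0, h0⟩
        omega
      rw [hcard, pow_succ]
      ring
    · have hset : {x | x ∈ Ico (0:ℝ) 1 ∧ ∀ k ∈ t, bitSeq p k x = true}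
          = {x | x ∈ Ico (0:ℝ) 1 ∧ bstep p x ∈ T} := by
        ext x
        simp only [Set.mem_setOf_eq, hTdef]
        constructor
        · rintro ⟨hx, hall⟩
          exact ⟨hx, (hT' x).2 (fun k hk => hall k (Finset.mem_of_mem_erase hk))⟩
        · rintro ⟨hx, hmem⟩
          refine ⟨hx, fun k hk => ?_⟩
          have hk0 : k ≠ 0 := fun h => h0 (h ▸ hk)
          exact (hT' x).1 hmem k (Finset.mem_erase.2 ⟨hk0, hk⟩)
      rw [hset, step_any hp0 hp1 T, hTcap, hIH]
      congr 1
      rw [ht'def]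
      rw [Finset.card_image_of_injOn (by
        intro a ha b hb hab
        have ha0 : a ≠ 0 := (Finset.mem_erase.1 ha).1
        have hb0 : b ≠ 0 := (Finset.mem_erase.1 hb).1
        have hab' : a - 1 = b - 1 := hab
        omega)]
      rw [Finset.erase_eq_of_notMem h0]


open ProbabilityTheory

variable (p : ℝ) (ι : Type*) [Encodable ι]

/-- the coordinate functions as bits of a uniform random number -/
def bg : ℝ → (ι → Bool) := fun x i => bitSeq p (Encodable.encode i) x

lemma measurable_bg : Measurable (bg p ι) :=
  measurable_pi_iff.2 fun i => measurable_bitSeq p _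

/-- the Bernoulli(p) product measure on `ι → Bool` -/
def bern : Measure (ι → Bool) := (volume.restrict (Ico (0:ℝ) 1)).map (bg p ι)

instance : IsProbabilityMeasure (volume.restrict (Ico (0:ℝ) 1)) := by
  constructor
  rw [Measure.restrict_apply_univ, Real.volume_Ico]
  norm_num

instance : IsProbabilityMeasure (bern p ι) :=
  Measure.isProbabilityMeasure_map (measurable_bg p ι).aemeasurable

variable {p ι}

lemma bern_cylinder (hp0 : 0 ≤ p) (hp1 : p ≤ 1) (s : Finset ι) :
    bern p ι {Z | ∀ i ∈ s, Z i = true} = ENNReal.ofReal p ^ s.card := by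
  have hmeas : MeasurableSet {Z : ι → Bool | ∀ i ∈ s, Z i = true} := by
    have : {Z : ι → Bool | ∀ i ∈ s, Z i = true} = ⋂ i ∈ s, (fun Z : ι → Bool => Z i) ⁻¹' {true} := by
      ext Z; simp
    rw [this]
    exact MeasurableSet.biInter s.countable_toSet
      (fun i _ => (measurable_pi_apply i) (by trivial))
  rw [bern, Measure.map_apply (measurable_bg p ι) hmeas, Measure.restrict_apply]
  · set t : Finset ℕ := s.image Encodable.encode with htdef
    have hpre : bg p ι ⁻¹' {Z | ∀ i ∈ s, Z i = true} ∩ Ico 0 1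
        = {x | x ∈ Ico (0:ℝ) 1 ∧ ∀ k ∈ t, bitSeq p k x = true} := by
      ext x
      simp only [Set.mem_inter_iff, Set.mem_preimage, Set.mem_setOf_eq, htdef,
        Finset.mem_image, bg]
      constructor
      · rintro ⟨h1, h2⟩
        exact ⟨h2, by rintro k ⟨i, hi, rfl⟩; exact h1 i hi⟩
      · rintro ⟨h1, h2⟩
        exact ⟨fun i hi => h2 _ ⟨i, hi, rfl⟩, h1⟩
    rw [hpre, cylinder_formula hp0 hp1 (t.sup id + 1) t
      (fun k hk => Nat.lt_succ_of_le (Finset.le_sup (f := id) hk))]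
    congr 1
    rw [htdef, Finset.card_image_of_injective _ Encodable.encode_injective]
  · exact (measurable_bg p ι) hmeas

/-- The coordinate sigma algebras. -/
def coordMS (i : ι) : MeasurableSpace (ι → Bool) :=
  MeasurableSpace.generateFrom {{Z : ι → Bool | Z i = true}}

lemma coordSet_measurable (i : ι) : MeasurableSet {Z : ι → Bool | Z i = true} := by
  have : {Z : ι → Bool | Z i = true} = (fun Z : ι → Bool => Z i) ⁻¹' {true} := by ext Z; simp
  rw [this]; exact (measurable_pi_apply i) (by trivial)

lemma coordMS_le (i : ι) : coordMS (ι := ι) i ≤ (by infer_instance : MeasurableSpace (ι → Bool)) :=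
  MeasurableSpace.generateFrom_le (by rintro _ rfl; exact coordSet_measurable i)

lemma eval_measurable_coordMS (i : ι) :
    Measurable[coordMS (ι := ι) i] (fun Z : ι → Bool => Z i) := by
  intro t _
  have hS : MeasurableSet[coordMS (ι := ι) i] {Z : ι → Bool | Z i = true} :=
    MeasurableSpace.measurableSet_generateFrom rfl
  have hdec : (fun Z : ι → Bool => Z i) ⁻¹' t =
      (if true ∈ t then {Z : ι → Bool | Z i = true} else ∅) ∪
      (if false ∈ t then {Z : ι → Bool | Z i = true}ᶜ else ∅) := by
    ext Z
    by_cases ht : true ∈ t <;> by_cases hf : false ∈ t <;>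
      cases hzi : Z i <;> simp [ht, hf, hzi]
  have h1 : MeasurableSet[coordMS (ι := ι) i]
      (if true ∈ t then {Z : ι → Bool | Z i = true} else ∅) := by
    split_ifs
    · exact hS
    · exact @MeasurableSet.empty _ (coordMS (ι := ι) i)
  have h2 : MeasurableSet[coordMS (ι := ι) i]
      (if false ∈ t then {Z : ι → Bool | Z i = true}ᶜ else ∅) := by
    split_ifs
    · exact hS.compl
    · exact @MeasurableSet.empty _ (coordMS (ι := ι) i)
  rw [hdec]
  exact h1.union h2

lemma bern_iIndep (hp0 : 0 ≤ p) (hp1 : p ≤ 1) :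
    iIndep (coordMS (ι := ι)) (bern p ι) := by
  apply iIndepSets.iIndep (π := fun i => {{Z : ι → Bool | Z i = true}})
  · exact coordMS_le
  · intro i
    exact IsPiSystem.singleton _
  · intro i; rfl
  · rw [iIndepSets_iff]
    intro s f hf
    have hfeq : ∀ i ∈ s, f i = {Z : ι → Bool | Z i = true} := fun i hi => hf i hi
    have h1 : (⋂ i ∈ s, f i) = {Z : ι → Bool | ∀ i ∈ s, Z i = true} := by
      ext Z
      simp only [Set.mem_iInter, Set.mem_setOf_eq]
      constructor
      · intro h i hi; have := h i hi; rw [hfeq i hi] at this; exact this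
      · intro h i hi; rw [hfeq i hi]; exact h i hi
    rw [h1, bern_cylinder hp0 hp1 s]
    have h2 : ∀ i ∈ s, bern p ι (f i) = ENNReal.ofReal p := by
      intro i hi
      rw [hfeq i hi]
      have := bern_cylinder hp0 hp1 (ι := ι) {i}
      simpa using this
    rw [Finset.prod_congr rfl h2, Finset.prod_const]

/-- a set depending only on coordinates in `J` is measurable w.r.t. the
sup of those coordinate sigma-algebras -/
lemma supported_measurable (J : Set ι) (A : Set (ι → Bool)) (hA : MeasurableSet A)
    (hinv : ∀ ⦃Z Z' : ι → Bool⦄, (∀ i ∈ J, Z i = Z' i) → Z ∈ A → Z' ∈ A) :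
    MeasurableSet[⨆ i ∈ J, coordMS (ι := ι) i] A := by
  classical
  set ρ : (ι → Bool) → (ι → Bool) := fun Z i => if i ∈ J then Z i else false with hρ
  have hρmeas : Measurable[⨆ i ∈ J, coordMS (ι := ι) i] ρ := by
    rw [measurable_iff_comap_le]
    rw [MeasurableSpace.pi, MeasurableSpace.comap_iSup]
    apply iSup_le
    intro a
    rw [MeasurableSpace.comap_comp]
    by_cases ha : a ∈ J
    · have heq : (fun b : ι → Bool => b a) ∘ ρ = fun Z : ι → Bool => Z a := by
        funext Z; simp [hρ, ha]
      rw [heq]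
      exact le_trans (measurable_iff_comap_le.1 (eval_measurable_coordMS a))
        (le_biSup (fun i => coordMS (ι := ι) i) ha)
    · have heq : (fun b : ι → Bool => b a) ∘ ρ = fun _ : ι → Bool => false := by
        funext Z; simp [hρ, ha]
      rw [heq]
      intro s hs
      obtain ⟨s', _, rfl⟩ := hs
      by_cases hf : false ∈ s'
      · have : (fun _ : ι → Bool => false) ⁻¹' s' = Set.univ := by ext; simp [hf]
        rw [this]; exact @MeasurableSet.univ _ (⨆ i ∈ J, coordMS (ι := ι) i)
      · have : (fun _ : ι → Bool => false) ⁻¹' s' = ∅ := by ext; simp [hf]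
        rw [this]; exact @MeasurableSet.empty _ (⨆ i ∈ J, coordMS (ι := ι) i)
  have hAeq : A = ρ ⁻¹' A := by
    ext Z
    have hagree : ∀ i ∈ J, Z i = ρ Z i := by intro i hi; simp [hρ, hi]
    constructor
    · intro h; exact hinv hagree h
    · intro h; exact hinv (fun i hi => (hagree i hi).symm) h
  rw [hAeq]
  exact hρmeas hA

/-- independence of events supported on disjoint coordinate sets -/
lemma bern_indepOn (hp0 : 0 ≤ p) (hp1 : p ≤ 1) {J₁ J₂ : Set ι} (hJ : Disjoint J₁ J₂)
    (A B : Set (ι → Bool)) (hA : MeasurableSet A)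
    (hAinv : ∀ ⦃Z Z' : ι → Bool⦄, (∀ i ∈ J₁, Z i = Z' i) → Z ∈ A → Z' ∈ A)
    (hB : MeasurableSet B)
    (hBinv : ∀ ⦃Z Z' : ι → Bool⦄, (∀ i ∈ J₂, Z i = Z' i) → Z ∈ B → Z' ∈ B) :
    bern p ι (A ∩ B) = bern p ι A * bern p ι B := by
  have hindep := indep_iSup_of_disjoint (m := coordMS (ι := ι)) coordMS_le
    (bern_iIndep hp0 hp1) hJ
  exact (Indep_iff _ _ _).1 hindep A B
    (supported_measurable J₁ A hA hAinv) (supported_measurable J₂ B hB hBinv)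

end BernAux

namespace Perc12

open PercFormal Relation

variable {n : ℕ}

def unit (n : ℕ) (a : Fin n) : Fin n → ℤ := fun j => if j = a then 1 else 0

def lvl {n : ℕ} (v : Fin n → ℤ) : ℤ := ∑ j, v j

lemma lvl_add (v w : Fin n → ℤ) : lvl (v + w) = lvl v + lvl w := by
  simp [lvl, Finset.sum_add_distrib]

lemma lvl_unit (a : Fin n) : lvl (unit n a) = 1 := by
  simp [lvl, unit]

lemma lvl_zero : lvl (0 : Fin n → ℤ) = 0 := by simp [lvl]

lemma adj_unit (x : Fin n → ℤ) (a : Fin n) : dirAdjN n x (x + unit n a) :=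
  ⟨a, by simp [unit], fun j hj => by simp [unit, hj]⟩

lemma adj_decomp {u v : Fin n → ℤ} (h : dirAdjN n u v) : ∃ a, v = u + unit n a := by
  obtain ⟨i, hi, hj⟩ := h
  refine ⟨i, funext fun j => ?_⟩
  by_cases hji : j = i
  · subst hji; simp [unit, hi]
  · simp [unit, hji, hj j hji]

def edge (x : Fin n → ℤ) (a : Fin n) : DirEdge (dirAdjN n) := ⟨(x, x + unit n a), adj_unit x a⟩

def openPath (ω : DirEdge (dirAdjN n) → Bool) : (Fin n → ℤ) → List (Fin n) → Prop
  | _, [] => True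
  | x, a :: l => ω (edge x a) = true ∧ openPath ω (x + unit n a) l

def pathEnd (x : Fin n → ℤ) (l : List (Fin n)) : Fin n → ℤ := x + (l.map (unit n)).sum

lemma pathEnd_nil (x : Fin n → ℤ) : pathEnd x ([] : List (Fin n)) = x := by simp [pathEnd]

lemma pathEnd_cons (x : Fin n → ℤ) (a : Fin n) (l : List (Fin n)) :
    pathEnd x (a :: l) = pathEnd (x + unit n a) l := by
  simp [pathEnd, add_assoc]

lemma pathEnd_append_singleton (x : Fin n → ℤ) (l : List (Fin n)) (a : Fin n) :
    pathEnd x (l ++ [a]) = pathEnd x l + unit n a := by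
  simp [pathEnd, add_assoc]

lemma lvl_pathEnd (x : Fin n → ℤ) (l : List (Fin n)) :
    lvl (pathEnd x l) = lvl x + l.length := by
  induction l generalizing x with
  | nil => simp [pathEnd_nil]
  | cons a l ih =>
    rw [pathEnd_cons, ih, lvl_add, lvl_unit]
    simp; ring

lemma openPath_append (ω : DirEdge (dirAdjN n) → Bool) (x : Fin n → ℤ) (l : List (Fin n))
    (a : Fin n) :
    openPath ω x (l ++ [a]) ↔ openPath ω x l ∧ ω (edge (pathEnd x l) a) = true := by
  induction l generalizing x with
  | nil => simp [openPath, pathEnd_nil]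
  | cons b l ih =>
    have hred : openPath ω x (b :: (l ++ [a])) =
        (ω (edge x b) = true ∧ openPath ω (x + unit n b) (l ++ [a])) := rfl
    have hred2 : openPath ω x (b :: l) =
        (ω (edge x b) = true ∧ openPath ω (x + unit n b) l) := rfl
    rw [List.cons_append, hred, hred2, ih, pathEnd_cons, ← and_assoc]

lemma openPath_take (ω : DirEdge (dirAdjN n) → Bool) (k : ℕ) (x : Fin n → ℤ)
    (l : List (Fin n)) (h : openPath ω x l) : openPath ω x (l.take k) := by
  induction l generalizing x k with
  | nil => simp only [List.take_nil]; trivial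
  | cons a l ih =>
    cases k with
    | zero => trivial
    | succ k => exact ⟨h.1, ih k _ h.2⟩

lemma openPath_reachable (ω : DirEdge (dirAdjN n) → Bool) (x : Fin n → ℤ) (l : List (Fin n))
    (h : openPath ω x l) : ReflTransGen (dirOpenRel (dirAdjN n) ω) x (pathEnd x l) := by
  induction l generalizing x with
  | nil => rw [pathEnd_nil]
  | cons a l ih =>
    rw [pathEnd_cons]
    exact ReflTransGen.head ⟨adj_unit x a, h.1⟩ (ih _ h.2)

lemma reachable_toPath {ω : DirEdge (dirAdjN n) → Bool} {x w : Fin n → ℤ}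
    (h : ReflTransGen (dirOpenRel (dirAdjN n) ω) x w) :
    ∃ l, openPath ω x l ∧ pathEnd x l = w := by
  induction h with
  | refl => exact ⟨[], trivial, pathEnd_nil x⟩
  | tail hab hbc ih =>
    obtain ⟨l, hop, hend⟩ := ih
    obtain ⟨hadj, hopen⟩ := hbc
    obtain ⟨a, rfl⟩ := adj_decomp hadj
    refine ⟨l ++ [a], (openPath_append ω x l a).2 ⟨hop, ?_⟩, by
      rw [pathEnd_append_singleton, hend]⟩
    subst hend
    exact hopen

lemma pathEnd_coord_bounds (l : List (Fin n)) (x : Fin n → ℤ) (t : Fin n) :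
    x t ≤ pathEnd x l t ∧ pathEnd x l t ≤ x t + l.length := by
  induction l generalizing x with
  | nil => simp [pathEnd_nil]
  | cons a l ih =>
    rw [pathEnd_cons]
    have h := ih (x + unit n a)
    have h1 : x t ≤ (x + unit n a) t := by
      simp only [Pi.add_apply, unit]
      split_ifs <;> omega
    have h2 : (x + unit n a) t ≤ x t + 1 := by
      simp only [Pi.add_apply, unit]
      split_ifs <;> omega
    constructor
    · omega
    · have : ((l.length : ℤ)) + 1 = ((a :: l).length : ℤ) := by simp
      omega

/-! ### Chains -/

def addPair (s : Sym2 (Fin n)) : Fin n → ℤ :=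
  Sym2.lift ⟨fun a b => unit n a + unit n b, fun a b => add_comm _ _⟩ s

lemma addPair_mk (a b : Fin n) : addPair s(a, b) = unit n a + unit n b := rfl

lemma lvl_addPair (s : Sym2 (Fin n)) : lvl (addPair s) = 2 := by
  induction s using Sym2.ind with
  | _ a b => rw [addPair_mk, lvl_add, lvl_unit, lvl_unit]; norm_num

def chainW (x : Fin n → ℤ) (c : List (Sym2 (Fin n))) : Fin n → ℤ := x + (c.map addPair).sum

lemma chainW_nil (x : Fin n → ℤ) : chainW x [] = x := by simp [chainW]

lemma chainW_cons (x : Fin n → ℤ) (s : Sym2 (Fin n)) (c : List (Sym2 (Fin n))) :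
    chainW x (s :: c) = chainW (x + addPair s) c := by
  simp [chainW, add_assoc]

lemma lvl_chainW (x : Fin n → ℤ) (c : List (Sym2 (Fin n))) :
    lvl (chainW x c) = lvl x + 2 * c.length := by
  induction c generalizing x with
  | nil => simp [chainW_nil]
  | cons s c ih =>
    rw [chainW_cons, ih, lvl_add, lvl_addPair]
    simp; ring

def chainOf : List (Fin n) → List (Sym2 (Fin n))
  | a :: b :: l => s(a, b) :: chainOf l
  | _ => []

lemma chainOf_len : ∀ (i : ℕ) (l : List (Fin n)), l.length = 2 * i → (chainOf l).length = i := by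
  intro i
  induction i with
  | zero =>
    intro l hl
    have hnil : l = [] := List.length_eq_zero_iff.1 (by omega)
    subst hnil
    rfl
  | succ i ih =>
    intro l hl
    match l with
    | a :: b :: t =>
      have : t.length = 2 * i := by simp at hl; omega
      simp [chainOf, ih t this]

/-! ### The edge-to-vertex variable map -/

def evar (e : DirEdge (dirAdjN n)) : (Fin n → ℤ) ⊕ (Fin n → ℤ) :=
  if Even (lvl e.1.1) then Sum.inl e.1.1 else Sum.inr e.1.2

def Phi (Z : ((Fin n → ℤ) ⊕ (Fin n → ℤ)) → Bool) : DirEdge (dirAdjN n) → Bool :=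
  fun e => Z (evar e)

lemma measurable_Phi : Measurable (Phi (n := n)) :=
  measurable_pi_iff.2 fun e => measurable_pi_apply (evar e)

/-- The core extraction lemma: an open path (w.r.t. `Phi Z`) starting at an even-level
vertex forces all the `inl`/`inr` variables along the even vertices of its chain. -/
lemma core : ∀ (N : ℕ) (l : List (Fin n)), l.length ≤ N →
    ∀ (x : Fin n → ℤ) (Z : ((Fin n → ℤ) ⊕ (Fin n → ℤ)) → Bool),
    openPath (Phi Z) x l → Even (lvl x) →
    (∀ j : ℕ, 2 * j < l.length → Z (Sum.inl (chainW x ((chainOf l).take j))) = true) ∧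
    (∀ j : ℕ, 1 ≤ j → 2 * j ≤ l.length → Z (Sum.inr (chainW x ((chainOf l).take j))) = true) := by
  intro N
  induction N with
  | zero =>
    intro l hl x Z _ _
    have : l = [] := List.length_eq_zero_iff.1 (by omega)
    subst this
    exact ⟨fun j hj => by simp at hj, fun j hj hj2 => by simp at hj2; omega⟩
  | succ N ih =>
    intro l hl x Z hop hx
    match l with
    | [] => exact ⟨fun j hj => by simp at hj, fun j hj hj2 => by simp at hj2; omega⟩
    | [a] =>
      have e1 : Z (Sum.inl x) = true := by
        have := hop.1
        rw [Phi, evar] at this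
        rw [if_pos (show Even (lvl (edge x a).1.1) from hx)] at this; simpa [edge] using this
      constructor
      · intro j hj
        have : j = 0 := by simp at hj; omega
        subst this
        simpa [chainW_nil] using e1
      · intro j hj hj2
        simp at hj2; omega
    | a :: b :: t =>
      obtain ⟨h1, h2, h3⟩ : Phi Z (edge x a) = true ∧ Phi Z (edge (x + unit n a) b) = true ∧
          openPath (Phi Z) (x + unit n a + unit n b) t := ⟨hop.1, hop.2.1, hop.2.2⟩
      have e1 : Z (Sum.inl x) = true := by
        rw [Phi, evar] at h1
        rw [if_pos (show Even (lvl (edge x a).1.1) from hx)] at h1; simpa [edge] using h1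
      have hodd : ¬ Even (lvl (x + unit n a)) := by
        rw [lvl_add, lvl_unit]
        rw [Int.even_add_one]
        simpa using hx
      have e2 : Z (Sum.inr (x + unit n a + unit n b)) = true := by
        rw [Phi, evar] at h2
        rw [if_neg (show ¬ Even (lvl (edge (x + unit n a) b).1.1) from hodd)] at h2; simpa [edge] using h2
      set x' : Fin n → ℤ := x + addPair s(a, b) with hx'def
      have hx'eq : x' = x + unit n a + unit n b := by
        rw [hx'def, addPair_mk, ← add_assoc]
      have hx'even : Even (lvl x') := by
        rw [hx'def, lvl_add, lvl_addPair]
        exact hx.add even_two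
      have hIH := ih t (by simp at hl; omega) x' Z (by rw [hx'eq]; exact h3) hx'even
      have hchain : chainOf (a :: b :: t) = s(a, b) :: chainOf t := rfl
      constructor
      · intro j hj
        cases j with
        | zero => simpa [chainW_nil] using e1
        | succ j =>
          rw [hchain, List.take_succ_cons, chainW_cons, ← hx'def]
          exact hIH.1 j (by simp at hj ⊢; omega)
      · intro j hj1 hj2
        cases j with
        | zero => omega
        | succ j =>
          rw [hchain, List.take_succ_cons, chainW_cons, ← hx'def]
          cases j with
          | zero =>
            rw [List.take_zero, chainW_nil, hx'eq]
            exact e2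
          | succ j =>
            exact hIH.2 (j + 1) (by omega) (by simp at hj2 ⊢; omega)

lemma measurableSet_openPath (x : Fin n → ℤ) (l : List (Fin n)) :
    MeasurableSet {ω : DirEdge (dirAdjN n) → Bool | openPath ω x l} := by
  induction l generalizing x with
  | nil => simp [openPath]
  | cons a l ih =>
    have : {ω : DirEdge (dirAdjN n) → Bool | openPath ω x (a :: l)}
        = ((fun ω : DirEdge (dirAdjN n) → Bool => ω (edge x a)) ⁻¹' {true})
          ∩ {ω | openPath ω (x + unit n a) l} := by
      ext ω; simp [openPath]
    rw [this]
    exact ((measurable_pi_apply (edge x a)) (by trivial)).inter (ih _)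

end Perc12

namespace Perc12

open PercFormal Relation MeasureTheory BernAux

/-! ### The measure -/

def Pm (p : ℝ) (n : ℕ) : Measure (DirEdge (dirAdjN n) → Bool) :=
  (bern p ((Fin n → ℤ) ⊕ (Fin n → ℤ))).map (Phi (n := n))

instance (p : ℝ) (n : ℕ) : IsProbabilityMeasure (Pm p n) :=
  Measure.isProbabilityMeasure_map (measurable_Phi).aemeasurable

variable {p : ℝ} {n : ℕ}

lemma Pm_marginal (hp0 : 0 ≤ p) (hp1 : p ≤ 1) (e : DirEdge (dirAdjN n)) :
    Pm p n {ω | ω e = true} = ENNReal.ofReal p := by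
  have hmeas : MeasurableSet {ω : DirEdge (dirAdjN n) → Bool | ω e = true} := by
    have : {ω : DirEdge (dirAdjN n) → Bool | ω e = true}
        = (fun ω : DirEdge (dirAdjN n) → Bool => ω e) ⁻¹' {true} := by ext ω; simp
    rw [this]; exact (measurable_pi_apply e) (by trivial)
  rw [Pm, Measure.map_apply measurable_Phi hmeas]
  have hpre : Phi (n := n) ⁻¹' {ω | ω e = true}
      = {Z | ∀ i ∈ ({evar e} : Finset ((Fin n → ℤ) ⊕ (Fin n → ℤ))), Z i = true} := by
    ext Z; simp [Phi]
  rw [hpre, bern_cylinder hp0 hp1]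
  simp

lemma Pm_oneIndep (hp0 : 0 ≤ p) (hp1 : p ≤ 1) : OneIndependentDir (dirAdjN n) (Pm p n) := by
  intro F₁ F₂ hdist A B hA hB
  obtain ⟨hAm, hAsupp⟩ := hA
  obtain ⟨hBm, hBsupp⟩ := hB
  have hJ : Disjoint (evar '' F₁) (evar '' F₂) := by
    rw [Set.disjoint_left]
    rintro idx ⟨e₁, he₁, rfl⟩ ⟨e₂, he₂, heq⟩
    obtain ⟨h11, h12, h21, h22⟩ := hdist e₁ he₁ e₂ he₂
    unfold evar at heq
    split_ifs at heq
    all_goals first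
      | exact h11 (Sum.inl.inj heq).symm
      | exact h22 (Sum.inr.inj heq).symm
      | simp at heq
  have hinvA : ∀ ⦃Z Z' : ((Fin n → ℤ) ⊕ (Fin n → ℤ)) → Bool⦄,
      (∀ i ∈ evar '' F₁, Z i = Z' i) → Z ∈ Phi ⁻¹' A → Z' ∈ Phi ⁻¹' A := by
    intro Z Z' hagree hZ
    exact hAsupp (fun e he => hagree _ ⟨e, he, rfl⟩) hZ
  have hinvB : ∀ ⦃Z Z' : ((Fin n → ℤ) ⊕ (Fin n → ℤ)) → Bool⦄,
      (∀ i ∈ evar '' F₂, Z i = Z' i) → Z ∈ Phi ⁻¹' B → Z' ∈ Phi ⁻¹' B := by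
    intro Z Z' hagree hZ
    exact hBsupp (fun e he => hagree _ ⟨e, he, rfl⟩) hZ
  rw [Pm, Measure.map_apply measurable_Phi (hAm.inter hBm),
    Measure.map_apply measurable_Phi hAm, Measure.map_apply measurable_Phi hBm,
    Set.preimage_inter]
  exact bern_indepOn hp0 hp1 hJ _ _ (measurable_Phi hAm) hinvA (measurable_Phi hBm) hinvB

/-! ### The union bound over chains -/

lemma main_bound (hp0 : 0 ≤ p) (hp1 : p ≤ 1) (hn : 1 ≤ n) (x : Fin n → ℤ)
    (hx : Even (lvl x)) (i : ℕ) :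
    Pm p n {ω | ∃ v, v ∈ dirClusterSet (dirAdjN n) ω {x} ∧ lvl v = lvl x + 2 * i}
      ≤ ENNReal.ofReal (((n : ℝ) * (n + 1) * p ^ 2 / 2) ^ i) := by
  classical
  set G : (Fin i → Sym2 (Fin n)) → Set (DirEdge (dirAdjN n) → Bool) :=
    fun c => ⋃ (l : List (Fin n)) (_ : l.length = 2 * i ∧ chainOf l = List.ofFn c),
      {ω | openPath ω x l} with hGdef
  -- coverage
  have hd0 : Sym2 (Fin n) := s(⟨0, hn⟩, ⟨0, hn⟩)
  have hcov : {ω | ∃ v, v ∈ dirClusterSet (dirAdjN n) ω {x} ∧ lvl v = lvl x + 2 * i}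
      ⊆ ⋃ c, G c := by
    rintro ω ⟨v, hv, hlvl⟩
    obtain ⟨u, hu, hpath⟩ := hv
    rw [Set.mem_singleton_iff] at hu
    rw [hu] at hpath
    obtain ⟨l, hop, hend⟩ := reachable_toPath hpath
    have hlen : l.length = 2 * i := by
      have h1 := lvl_pathEnd x l
      rw [hend, hlvl] at h1
      omega
    have hclen : (chainOf l).length = i := chainOf_len i l hlen
    refine Set.mem_iUnion.2 ⟨fun j => (chainOf l).getD j hd0, ?_⟩
    refine Set.mem_iUnion.2 ⟨l, Set.mem_iUnion.2 ⟨⟨hlen, ?_⟩, hop⟩⟩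
    apply List.ext_getElem
    · simp [hclen]
    · intro k h1 h2
      simp only [List.getElem_ofFn]
      rw [List.getD_eq_getElem _ _ (by omega)]
  have hGmeas : ∀ c, MeasurableSet (G c) := fun c =>
    MeasurableSet.iUnion fun l => MeasurableSet.iUnion fun _ => measurableSet_openPath x l
  -- per-chain bound
  have hGbound : ∀ c, Pm p n (G c) ≤ ENNReal.ofReal p ^ (2 * i) := by
    intro c
    rw [Pm, Measure.map_apply measurable_Phi (hGmeas c)]
    set Sc : Finset ((Fin n → ℤ) ⊕ (Fin n → ℤ)) :=
      ((Finset.range i).image fun j => Sum.inl (chainW x ((List.ofFn c).take j))) ∪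
      ((Finset.Icc 1 i).image fun j => Sum.inr (chainW x ((List.ofFn c).take j))) with hScdef
    have hlenofn : (List.ofFn c).length = i := List.length_ofFn
    have hWlvl : ∀ j, j ≤ i → lvl (chainW x ((List.ofFn c).take j)) = lvl x + 2 * j := by
      intro j hj
      rw [lvl_chainW, List.length_take, hlenofn, min_eq_left hj]
    have hsub : Phi ⁻¹' (G c) ⊆ {Z | ∀ idx ∈ Sc, Z idx = true} := by
      intro Z hZ
      simp only [Set.mem_preimage, hGdef, Set.mem_iUnion] at hZ
      obtain ⟨l, ⟨hlen, hcl⟩, hop⟩ := hZ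
      have hcore := core l.length l le_rfl x Z hop hx
      intro idx hidx
      rw [hScdef, Finset.mem_union] at hidx
      rcases hidx with h | h
      · obtain ⟨j, hj, rfl⟩ := Finset.mem_image.1 h
        rw [Finset.mem_range] at hj
        rw [← hcl]
        exact hcore.1 j (by omega)
      · obtain ⟨j, hj, rfl⟩ := Finset.mem_image.1 h
        rw [Finset.mem_Icc] at hj
        rw [← hcl]
        exact hcore.2 j hj.1 (by omega)
    have hdisj : Disjoint
        ((Finset.range i).image fun j => (Sum.inl (chainW x ((List.ofFn c).take j)) :
          (Fin n → ℤ) ⊕ (Fin n → ℤ)))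
        ((Finset.Icc 1 i).image fun j => (Sum.inr (chainW x ((List.ofFn c).take j)) :
          (Fin n → ℤ) ⊕ (Fin n → ℤ))) := by
      rw [Finset.disjoint_left]
      rintro idx h1 h2
      obtain ⟨j, _, rfl⟩ := Finset.mem_image.1 h1
      obtain ⟨j', _, heq⟩ := Finset.mem_image.1 h2
      exact Sum.inr_ne_inl heq
    have hinj1 : Set.InjOn (fun j => (Sum.inl (chainW x ((List.ofFn c).take j)) :
        (Fin n → ℤ) ⊕ (Fin n → ℤ))) (Finset.range i) := by
      intro a ha b hb h
      rw [Finset.coe_range, Set.mem_Iio] at ha hb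
      have := congrArg (fun z => Sum.elim lvl lvl z) h
      simp only [Sum.elim_inl] at this
      rw [hWlvl a (by omega), hWlvl b (by omega)] at this
      omega
    have hinj2 : Set.InjOn (fun j => (Sum.inr (chainW x ((List.ofFn c).take j)) :
        (Fin n → ℤ) ⊕ (Fin n → ℤ))) (Finset.Icc 1 i) := by
      intro a ha b hb h
      rw [Finset.coe_Icc, Set.mem_Icc] at ha hb
      have := congrArg (fun z => Sum.elim lvl lvl z) h
      simp only [Sum.elim_inr] at this
      rw [hWlvl a ha.2, hWlvl b hb.2] at this
      omega
    have hcard : Sc.card = 2 * i := by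
      rw [hScdef, Finset.card_union_of_disjoint hdisj,
        Finset.card_image_of_injOn hinj1, Finset.card_image_of_injOn hinj2,
        Finset.card_range, Nat.card_Icc]
      omega
    calc bern p _ (Phi ⁻¹' (G c)) ≤ bern p _ {Z | ∀ idx ∈ Sc, Z idx = true} :=
          measure_mono hsub
      _ = ENNReal.ofReal p ^ Sc.card := bern_cylinder hp0 hp1 Sc
      _ = ENNReal.ofReal p ^ (2 * i) := by rw [hcard]
  -- summation
  have harith : (Fintype.card (Fin i → Sym2 (Fin n)) : ℝ≥0∞) * ENNReal.ofReal p ^ (2 * i)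
      ≤ ENNReal.ofReal (((n : ℝ) * (n + 1) * p ^ 2 / 2) ^ i) := by
    have hcard : Fintype.card (Fin i → Sym2 (Fin n)) = ((n + 1).choose 2) ^ i := by
      rw [Fintype.card_fun, Sym2.card, Fintype.card_fin, Fintype.card_fin]
    have hchoose : (((n + 1).choose 2 : ℕ) : ℝ) = (n : ℝ) * (n + 1) / 2 := by
      rw [Nat.choose_two_right]
      simp only [Nat.add_sub_cancel]
      rw [Nat.cast_div (by rw [Nat.mul_comm]; exact (Nat.even_mul_succ_self n).two_dvd)
        (by norm_num)]
      push_cast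
      ring
    apply le_of_eq
    rw [hcard]
    rw [show ((((n + 1).choose 2) ^ i : ℕ) : ℝ≥0∞)
        = ENNReal.ofReal ((((n + 1).choose 2 : ℕ) : ℝ) ^ i) by
      rw [← ENNReal.ofReal_natCast]; norm_cast]
    rw [← ENNReal.ofReal_pow hp0, ← ENNReal.ofReal_mul (by positivity)]
    congr 1
    rw [hchoose, pow_mul, ← mul_pow]
    congr 1
    ring
  calc Pm p n {ω | ∃ v, v ∈ dirClusterSet (dirAdjN n) ω {x} ∧ lvl v = lvl x + 2 * i}
      ≤ Pm p n (⋃ c, G c) := measure_mono hcov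
    _ ≤ ∑' c, Pm p n (G c) := measure_iUnion_le _
    _ ≤ ∑' _c : Fin i → Sym2 (Fin n), ENNReal.ofReal p ^ (2 * i) :=
        ENNReal.tsum_le_tsum hGbound
    _ = (Fintype.card (Fin i → Sym2 (Fin n)) : ℝ≥0∞) * ENNReal.ofReal p ^ (2 * i) := by
        rw [tsum_fintype]
        simp [Finset.sum_const, Finset.card_univ, nsmul_eq_mul]
    _ ≤ _ := harith

end Perc12

namespace Perc12

open PercFormal Relation MeasureTheory BernAux

variable {p : ℝ} {n : ℕ}

lemma cluster_infinite_zero (hp0 : 0 ≤ p) (hp1 : p ≤ 1) (hn : 1 ≤ n)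
    (hβ : (n : ℝ) * (n + 1) * p ^ 2 / 2 < 1) (v : Fin n → ℤ) :
    Pm p n {ω | (dirClusterSet (dirAdjN n) ω {v}).Infinite} = 0 := by
  set β : ℝ := (n : ℝ) * (n + 1) * p ^ 2 / 2 with hβdef
  have hβ0 : 0 ≤ β := by positivity
  -- any k-level is reached if the cluster is infinite
  have hreach : ∀ k : ℕ, {ω | (dirClusterSet (dirAdjN n) ω {v}).Infinite}
      ⊆ {ω | ∃ w, w ∈ dirClusterSet (dirAdjN n) ω {v} ∧ lvl w = lvl v + (k : ℤ)} := by
    intro k ω hω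
    have hbox : (Set.Icc v (v + fun _ => (k : ℤ))).Finite := Set.finite_Icc _ _
    have hex : ∃ w ∈ dirClusterSet (dirAdjN n) ω {v}, w ∉ Set.Icc v (v + fun _ => (k : ℤ)) := by
      by_contra hcon
      push_neg at hcon
      exact hω (hbox.subset hcon)
    obtain ⟨w, hw, hnot⟩ := hex
    obtain ⟨u, hu, hpath⟩ := hw
    rw [Set.mem_singleton_iff] at hu
    rw [hu] at hpath
    obtain ⟨l, hop, hend⟩ := reachable_toPath hpath
    have hklen : k ≤ l.length := by
      by_contra hkl
      apply hnot
      rw [Set.mem_Icc]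
      constructor
      · intro t
        have hb := pathEnd_coord_bounds l v t
        rw [hend] at hb
        exact hb.1
      · intro t
        have hb := pathEnd_coord_bounds l v t
        rw [hend] at hb
        simp only [Pi.add_apply]
        omega
    refine ⟨pathEnd v (l.take k), ⟨v, rfl, openPath_reachable ω v (l.take k)
      (openPath_take ω k v l hop)⟩, ?_⟩
    rw [lvl_pathEnd, List.length_take, min_eq_left hklen]
  -- the bound for every m
  have hbound : ∀ m : ℕ, Pm p n {ω | (dirClusterSet (dirAdjN n) ω {v}).Infinite}
      ≤ ((n : ℝ≥0∞) + 1) * ENNReal.ofReal (β ^ m) := by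
    intro m
    by_cases hev : Even (lvl v)
    · have h1 := hreach (2 * m)
      have hc : ((2 * m : ℕ) : ℤ) = 2 * (m : ℤ) := by push_cast; ring
      rw [hc] at h1
      calc Pm p n {ω | (dirClusterSet (dirAdjN n) ω {v}).Infinite}
          ≤ Pm p n {ω | ∃ w, w ∈ dirClusterSet (dirAdjN n) ω {v} ∧ lvl w = lvl v + 2 * (m : ℤ)} :=
            measure_mono h1
        _ ≤ ENNReal.ofReal (β ^ m) := main_bound hp0 hp1 hn v hev m
        _ ≤ ((n : ℝ≥0∞) + 1) * ENNReal.ofReal (β ^ m) :=le_mul_of_one_le_left (zero_le)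
            (by simp)
    · -- odd level: go one step first
      have hsub : {ω | ∃ w, w ∈ dirClusterSet (dirAdjN n) ω {v} ∧ lvl w = lvl v + ((2*m+1 : ℕ) : ℤ)}
          ⊆ ⋃ a : Fin n, {ω | ∃ w, w ∈ dirClusterSet (dirAdjN n) ω {v + unit n a} ∧
              lvl w = lvl (v + unit n a) + 2 * (m : ℤ)} := by
        rintro ω ⟨w, hw, hlvl⟩
        obtain ⟨u, hu, hpath⟩ := hw
        rw [Set.mem_singleton_iff] at hu
        rw [hu] at hpath
        obtain ⟨l, hop, hend⟩ := reachable_toPath hpath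
        have hlen : l.length = 2 * m + 1 := by
          have h1 := lvl_pathEnd v l
          rw [hend, hlvl] at h1
          omega
        match l, hlen with
        | a :: t, hlen =>
          refine Set.mem_iUnion.2 ⟨a, w, ⟨v + unit n a, rfl, ?_⟩, ?_⟩
          · have := openPath_reachable ω (v + unit n a) t hop.2
            rwa [← pathEnd_cons, hend] at this
          · have h2 : lvl w = lvl (v + unit n a) + t.length := by
              rw [← hend, pathEnd_cons, lvl_pathEnd]
            have h3 : t.length = 2 * m := by simp at hlen; omega
            rw [h2, h3]
            push_cast; ring
      calc Pm p n {ω | (dirClusterSet (dirAdjN n) ω {v}).Infinite}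
          ≤ Pm p n (⋃ a : Fin n, {ω | ∃ w, w ∈ dirClusterSet (dirAdjN n) ω {v + unit n a} ∧
              lvl w = lvl (v + unit n a) + 2 * (m : ℤ)}) :=
            measure_mono ((hreach (2*m+1)).trans hsub)
        _ ≤ ∑' a : Fin n, Pm p n {ω | ∃ w, w ∈ dirClusterSet (dirAdjN n) ω {v + unit n a} ∧
              lvl w = lvl (v + unit n a) + 2 * (m : ℤ)} := measure_iUnion_le _
        _ ≤ ∑' _a : Fin n, ENNReal.ofReal (β ^ m) := ENNReal.tsum_le_tsum (fun a => by
            apply main_bound hp0 hp1 hn (v + unit n a) ?_ m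
            rw [lvl_add, lvl_unit]
            rw [Int.even_add_one]
            simpa using hev)
        _ = (n : ℝ≥0∞) * ENNReal.ofReal (β ^ m) := by
            rw [tsum_fintype]
            simp [Finset.sum_const, Finset.card_univ, nsmul_eq_mul]
        _ ≤ ((n : ℝ≥0∞) + 1) * ENNReal.ofReal (β ^ m) := by
            gcongr
            exact le_self_add
  -- take the limit
  have htend : Filter.Tendsto (fun m : ℕ => ((n : ℝ≥0∞) + 1) * ENNReal.ofReal (β ^ m))
      Filter.atTop (nhds 0) := by
    have h1 : Filter.Tendsto (fun m : ℕ => β ^ m) Filter.atTop (nhds 0) :=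
      tendsto_pow_atTop_nhds_zero_of_lt_one hβ0 hβ
    have h2 : Filter.Tendsto (fun m : ℕ => ENNReal.ofReal (β ^ m)) Filter.atTop (nhds 0) := by
      have := (ENNReal.continuous_ofReal.tendsto 0).comp h1
      simpa [Function.comp_def] using this
    have h3 := ENNReal.Tendsto.const_mul (a := (n : ℝ≥0∞) + 1) h2
      (Or.inr (by simp [ENNReal.add_ne_top]))
    simpa using h3
  have hle : Pm p n {ω | (dirClusterSet (dirAdjN n) ω {v}).Infinite} ≤ 0 :=
    ge_of_tendsto' htend hbound
  exact le_antisymm hle (zero_le)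

lemma no_perc (hp0 : 0 ≤ p) (hp1 : p ≤ 1) (hn : 1 ≤ n)
    (hβ : (n : ℝ) * (n + 1) * p ^ 2 / 2 < 1) :
    ¬ PercolatesDir (dirAdjN n) (Pm p n) := by
  intro hperc
  rw [PercolatesDir] at hperc
  have hsub : {ω : DirEdge (dirAdjN n) → Bool | ∃ v, (dirClusterSet (dirAdjN n) ω {v}).Infinite}
      ⊆ ⋃ v : Fin n → ℤ, {ω | (dirClusterSet (dirAdjN n) ω {v}).Infinite} := by
    rintro ω ⟨v, h⟩
    exact Set.mem_iUnion.2 ⟨v, h⟩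
  have hzero : Pm p n {ω : DirEdge (dirAdjN n) → Bool |
      ∃ v, (dirClusterSet (dirAdjN n) ω {v}).Infinite} = 0 := by
    apply le_antisymm _ (zero_le)
    calc Pm p n _ ≤ Pm p n (⋃ v : Fin n → ℤ, {ω | (dirClusterSet (dirAdjN n) ω {v}).Infinite}) :=
        measure_mono hsub
      _ ≤ ∑' v : Fin n → ℤ, Pm p n {ω | (dirClusterSet (dirAdjN n) ω {v}).Infinite} :=
        measure_iUnion_le _
      _ = 0 := by simp [cluster_infinite_zero hp0 hp1 hn hβ]
  rw [hzero] at hperc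
  exact lt_irrefl _ hperc

end Perc12





/-- For every `p ∈ [0,1]` and `n ≥ 1` there is a `1`-independent bond
percolation model on `ℤ⃗ⁿ` with all marginals `p` such that
`P[|C⃗₀ ∩ L_{2i}| > 0] ≤ (n(n+1)p²/2)^i` for all `i ≥ 0`; in particular it does not
percolate when `n(n+1)p²/2 < 1`. -/
theorem exists_one_independent_nonpercolating_dirZn
    (p : ℝ) (hp : p ∈ Set.Icc (0 : ℝ) 1) (n : ℕ) (hn : 1 ≤ n) :
    ∃ P : MeasureTheory.Measure (PercFormal.DirEdge (PercFormal.dirAdjN n) → Bool),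
      MeasureTheory.IsProbabilityMeasure P ∧
      PercFormal.OneIndependentDir (PercFormal.dirAdjN n) P ∧
      (∀ e : PercFormal.DirEdge (PercFormal.dirAdjN n),
        P {ω | ω e = true} = ENNReal.ofReal p) ∧
      (∀ i : ℕ,
        P {ω | ∃ v : Fin n → ℤ,
            v ∈ PercFormal.dirClusterSet (PercFormal.dirAdjN n) ω {0} ∧
            (∑ j, v j) = 2 * (i : ℤ)}
          ≤ ENNReal.ofReal (((n : ℝ) * (n + 1) * p ^ 2 / 2) ^ i)) ∧
      ((n : ℝ) * (n + 1) * p ^ 2 / 2 < 1 →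
        ¬ PercFormal.PercolatesDir (PercFormal.dirAdjN n) P) := by
  obtain ⟨hp0, hp1⟩ := hp
  refine ⟨Perc12.Pm p n, inferInstance, Perc12.Pm_oneIndep hp0 hp1,
    Perc12.Pm_marginal hp0 hp1, ?_, Perc12.no_perc hp0 hp1 hn⟩
  intro i
  have hx : Even (Perc12.lvl (0 : Fin n → ℤ)) := by
    rw [Perc12.lvl_zero]; exact Even.zero
  have hmb := Perc12.main_bound hp0 hp1 hn (0 : Fin n → ℤ) hx i
  have hset : {ω : PercFormal.DirEdge (PercFormal.dirAdjN n) → Bool |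
        ∃ v : Fin n → ℤ, v ∈ PercFormal.dirClusterSet (PercFormal.dirAdjN n) ω {0} ∧
          (∑ j, v j) = 2 * (i : ℤ)}
      = {ω | ∃ v, v ∈ PercFormal.dirClusterSet (PercFormal.dirAdjN n) ω {0} ∧
          Perc12.lvl v = Perc12.lvl (0 : Fin n → ℤ) + 2 * (i : ℤ)} := by
    ext ω
    simp only [Set.mem_setOf_eq, Perc12.lvl, Pi.zero_apply, Finset.sum_const_zero, zero_add]
  rw [hset]
  exact hmb
end
end

section
/- Let p ∈ [0,1] and let P be the probability measure on {0,1}^{\{1,2,3,4\}} under which ω₁ = ω₂ and ω₃ = ω₄ almost surely, with (ω₁, ω₃) a pair of independent Bernoulli(p) random variables. Then P is positively associated with all marginals equal to p, and the increasing event A := {ω₁ = ω₃ = 1} ∪ {ω₂ = ω₄ = 1} satisfies P[A] = p². On the other hand, if Q is the probability measure under which ω_j = Z⁺·Z⁻_j for j = 1,…,4, with Z⁺, Z⁻₁, Z⁻₂, Z⁻₃, Z⁻₄ independent Bernoulli(p), then Q[A] = 2p³ − p⁵, and 2p³ − p⁵ > p² for every p ∈ ((√5 − 1)/2, 1). In particular,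 for such p, P[A] < Q[A], so the law P of the four coordinates is not stochastically larger than Q on this increasing event. -/
open MeasureTheory Filter
open scoped ENNReal Classical

noncomputable section

namespace PercFormal

/-- The Bernoulli measure on `Bool` with parameter `p` (for `p ∈ [0,1]`). -/
def bern (p : ℝ) : MeasureTheory.Measure Bool :=
  (PMF.bernoulli (min (Real.toNNReal p) 1) (min_le_right _ _)).toMeasure

instance (p : ℝ) : MeasureTheory.IsProbabilityMeasure (bern p) := by
  unfold bern; infer_instance

/-- The measure `P` of Statement 18: `ω₁ = ω₂` and `ω₃ = ω₄` a.s., with `(ω₁, ω₃)` a pair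
of independent Bernoulli(`p`) random variables (coordinates `0,1,2,3` stand for
`ω₁,…,ω₄`). -/
def P18 (p : ℝ) : MeasureTheory.Measure (Fin 4 → Bool) :=
  ((bern p).prod (bern p)).map (fun z => ![z.1, z.1, z.2, z.2])

/-- The measure `Q` of Statement 18: `ω_j = Z⁺ · Z⁻_j` with `Z⁺, Z⁻₁, …, Z⁻₄` independent
Bernoulli(`p`). -/
def Q18 (p : ℝ) : MeasureTheory.Measure (Fin 4 → Bool) :=
  ((bern p).prod (MeasureTheory.Measure.pi fun _ : Fin 4 => bern p)).map
    (fun z j => z.1 && z.2 j)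

/-- The increasing event `A = {ω₁ = ω₃ = 1} ∪ {ω₂ = ω₄ = 1}`. -/
def A18 : Set (Fin 4 → Bool) :=
  {ω | (ω 0 = true ∧ ω 2 = true) ∨ (ω 1 = true ∧ ω 3 = true)}

end PercFormal

/-! P is the image of the product measure `bern p ⊗ bern p` on the distributive lattice
`Bool × Bool` under the monotone map `z ↦ ![z.1, z.1, z.2, z.2]`. A product of measures on
chains satisfies the FKG lattice condition with equality, so the FKG inequality on
`Bool × Bool` pulls back to positive association of P.

Under P the event A is `{ω₁ = ω₃ = 1}`, of probability `p²`. Under Q it is `{Z⁺ = 1}`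
intersected with the union of two events of probability `p²` whose intersection has
probability `p⁴`, hence `Q[A] = p (2p² − p⁴)`. Finally
`2p³ − p⁵ − p² = p² (1 − p) (p² + p − 1)` and `(√5 − 1)/2` is the positive root of
`p² + p − 1`. -/

theorem map_inf_mul_map_sup {α M : Type*} [LinearOrder α] [CommMagma M] (f : α → M)
    (a b : α) : f (a ⊓ b) * f (a ⊔ b) = f a * f b := by
  rcases le_total a b with h | h <;> simp [h, mul_comm]

theorem MeasureTheory.Measure.prod_singleton_mul_prod_singleton {α β : Type*}
    [LinearOrder α] [LinearOrder β] [MeasurableSpace α] [MeasurableSpace β]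
    [MeasurableSingletonClass α] [MeasurableSingletonClass β] (μ : Measure α) (ν : Measure β)
    [SigmaFinite ν] (x y : α × β) :
    μ.prod ν {x} * μ.prod ν {y} = μ.prod ν {x ⊓ y} * μ.prod ν {x ⊔ y} := by
  obtain ⟨a, b⟩ := x
  obtain ⟨c, d⟩ := y
  simp only [Prod.mk_inf_mk, Prod.mk_sup_mk, ← Set.singleton_prod_singleton,
    Measure.prod_prod]
  rw [mul_mul_mul_comm, ← map_inf_mul_map_sup (μ {·}) a c,
    ← map_inf_mul_map_sup (ν {·}) b d, mul_mul_mul_comm]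

theorem IsUpperSet.monotone_indicator_one {α : Type*} [Preorder α] {A : Set α}
    (hA : IsUpperSet A) : Monotone (A.indicator (1 : α → ℝ)) := by
  intro a b hab
  by_cases ha : a ∈ A
  · simp [ha, hA hab ha]
  · simp [ha, Set.indicator_nonneg]

theorem MeasureTheory.measure_mul_measure_le_of_isUpperSet {α : Type*} [Fintype α]
    [DistribLattice α] [MeasurableSpace α] [MeasurableSingletonClass α] (μ : Measure α)
    [IsFiniteMeasure μ] (hμ : ∀ a b, μ {a} * μ {b} ≤ μ {a ⊓ b} * μ {a ⊔ b})
    {A B : Set α} (hA : IsUpperSet A) (hB : IsUpperSet B) :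
    μ A * μ B ≤ μ Set.univ * μ (A ∩ B) := by
  have hsum (S : Set α) : ∑ a, μ.real {a} * S.indicator 1 a = μ.real S := by
    simp only [Set.indicator_apply, Pi.one_apply, mul_ite, mul_one, mul_zero]
    rw [← Finset.sum_filter, ← Set.coe_toFinset S, sum_measureReal_singleton]
    congr; ext; simp
  have hμ' (a b : α) : μ.real {a} * μ.real {b} ≤ μ.real {a ⊓ b} * μ.real {a ⊔ b} := by
    simp only [measureReal_def, ← ENNReal.toReal_mul]
    exact ENNReal.toReal_mono (by finiteness) (hμ a b)
  have h := fkg (A.indicator 1) (B.indicator 1) (fun a => μ.real {a})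
    (fun _ => measureReal_nonneg) (Set.indicator_nonneg fun _ _ => zero_le_one)
    (Set.indicator_nonneg fun _ _ => zero_le_one) hA.monotone_indicator_one
    hB.monotone_indicator_one hμ'
  rw [hsum A, hsum B, sum_measureReal_singleton, Finset.coe_univ] at h
  simp only [← Pi.mul_apply (A.indicator 1), ← Set.inter_indicator_one, hsum] at h
  rwa [← ENNReal.toReal_le_toReal (by finiteness) (by finiteness), ENNReal.toReal_mul,
    ENNReal.toReal_mul]

namespace PercFormal

theorem IncreasingEvent.isUpperSet {ι : Type*} {A : Set (ι → Bool)} (hA : IncreasingEvent A) :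
    IsUpperSet A :=
  fun _ _ hle hω => hA hω hle

theorem positivelyAssociated_map_of_monotone {α ι : Type*} [Fintype α] [DistribLattice α]
    [MeasurableSpace α] [MeasurableSingletonClass α] (μ : Measure α) [IsProbabilityMeasure μ]
    (hμ : ∀ a b, μ {a} * μ {b} ≤ μ {a ⊓ b} * μ {a ⊔ b})
    {f : α → ι → Bool} (hf : Monotone f) : PositivelyAssociated (μ.map f) := by
  intro A B hA hB hAi hBi
  have hf_meas := measurable_of_finite f
  rw [Measure.map_apply hf_meas hA, Measure.map_apply hf_meas hB,
    Measure.map_apply hf_meas (hA.inter hB), Set.preimage_inter]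
  simpa using measure_mul_measure_le_of_isUpperSet μ hμ (hAi.isUpperSet.preimage hf)
    (hBi.isUpperSet.preimage hf)

theorem bern_singleton_true {p : ℝ} (hp : p ≤ 1) : bern p {true} = ENNReal.ofReal p := by
  rw [bern, PMF.toMeasure_apply_singleton _ _ (measurableSet_singleton _)]
  exact congrArg ENNReal.ofNNReal (min_eq_left (Real.toNNReal_le_one.mpr hp))

theorem map_eval_P18 (p : ℝ) (j : Fin 4) : (P18 p).map (fun ω => ω j) = bern p := by
  rw [P18, Measure.map_map (measurable_pi_apply j) (measurable_of_finite _)]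
  fin_cases j
  · exact (Measure.map_fst_prod).trans (by rw [measure_univ, one_smul])
  · exact (Measure.map_fst_prod).trans (by rw [measure_univ, one_smul])
  · exact (Measure.map_snd_prod).trans (by rw [measure_univ, one_smul])
  · exact (Measure.map_snd_prod).trans (by rw [measure_univ, one_smul])

theorem P18_setOf_eq_true {p : ℝ} (hp : p ≤ 1) (j : Fin 4) :
    P18 p {ω | ω j = true} = ENNReal.ofReal p := by
  rw [← bern_singleton_true hp, ← map_eval_P18 p j,
    Measure.map_apply (measurable_pi_apply j) (measurableSet_singleton true)]
  rfl

theorem P18_A18 {p : ℝ} (hp : p ∈ Set.Icc (0 : ℝ) 1) :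
    P18 p A18 = ENNReal.ofReal (p ^ 2) := by
  have hpre : (fun z : Bool × Bool => ![z.1, z.1, z.2, z.2]) ⁻¹' A18 = {true} ×ˢ {true} := by
    ext ⟨a, b⟩; cases a <;> cases b <;> simp [A18]
  rw [P18, Measure.map_apply (measurable_of_finite _) (Set.toFinite _).measurableSet, hpre,
    Measure.prod_prod, bern_singleton_true hp.2, ← ENNReal.ofReal_mul hp.1, sq]

theorem pi_bern_real_setOf_forall_eq_true {ι : Type*} [Fintype ι] {p : ℝ}
    (hp : p ∈ Set.Icc (0 : ℝ) 1) (s : Finset ι) :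
    (Measure.pi fun _ : ι => bern p).real {ω | ∀ j ∈ s, ω j = true} = p ^ s.card := by
  have hpi : {ω : ι → Bool | ∀ j ∈ s, ω j = true} =
      Set.univ.pi fun j => if j ∈ s then {true} else Set.univ := by
    ext ω
    simp only [Set.mem_ofPred_eq, Set.mem_pi, Set.mem_univ, true_implies]
    exact forall_congr' fun j => by split_ifs <;> simp [*]
  rw [hpi, measureReal_def, Measure.pi_pi]
  simp only [apply_ite (bern p), measure_univ, bern_singleton_true hp.2, Finset.prod_ite_mem,
    Finset.univ_inter, Finset.prod_const, ← ENNReal.ofReal_pow hp.1,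
    ENNReal.toReal_ofReal (pow_nonneg hp.1 _)]

theorem pi_bern_A18 {p : ℝ} (hp : p ∈ Set.Icc (0 : ℝ) 1) :
    (Measure.pi fun _ : Fin 4 => bern p) A18 = ENNReal.ofReal (2 * p ^ 2 - p ^ 4) := by
  set E : Finset (Fin 4) → Set (Fin 4 → Bool) := fun s => {ω | ∀ j ∈ s, ω j = true}
  have hunion : A18 = E {0, 2} ∪ E {1, 3} := by
    ext ω; simp [A18, E]
  have hinter : E {0, 2} ∩ E {1, 3} = E Finset.univ := by
    ext ω; simp [E, Fin.forall_fin_succ]; tauto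
  have h := measureReal_union_add_inter (μ := Measure.pi fun _ : Fin 4 => bern p)
    (s := E {0, 2}) (Set.toFinite (E {1, 3})).measurableSet
  rw [hinter, pi_bern_real_setOf_forall_eq_true hp, pi_bern_real_setOf_forall_eq_true hp,
    pi_bern_real_setOf_forall_eq_true hp, Finset.card_univ, Fintype.card_fin,
    Finset.card_pair (by decide), Finset.card_pair (by decide)] at h
  rw [← ofReal_measureReal, hunion]
  congr 1
  linarith

theorem Q18_A18 {p : ℝ} (hp : p ∈ Set.Icc (0 : ℝ) 1) :
    Q18 p A18 = ENNReal.ofReal (2 * p ^ 3 - p ^ 5) := by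
  have hpre :
      (fun (z : Bool × (Fin 4 → Bool)) j => z.1 && z.2 j) ⁻¹' A18 = {true} ×ˢ A18 := by
    ext ⟨a, ω⟩; cases a <;> simp [A18]
  rw [Q18, Measure.map_apply (measurable_of_finite _) (Set.toFinite _).measurableSet, hpre,
    Measure.prod_prod, bern_singleton_true hp.2, pi_bern_A18 hp, ← ENNReal.ofReal_mul hp.1]
  ring_nf

theorem sq_lt_two_mul_pow_three_sub_pow_five {q : ℝ} (hq : q ∈ Set.Ioo ((√5 - 1) / 2) 1) :
    q ^ 2 < 2 * q ^ 3 - q ^ 5 := by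
  obtain ⟨hq₁, hq₂⟩ := hq
  have h5 : √5 ^ 2 = 5 := Real.sq_sqrt (by norm_num)
  have hq₀ : 0 < q := by nlinarith [Real.sqrt_nonneg 5]
  have hroot : 0 < q ^ 2 + q - 1 := by nlinarith [Real.sqrt_nonneg 5]
  have : 0 < q ^ 2 * (1 - q) * (q ^ 2 + q - 1) := by
    have := sub_pos.2 hq₂; positivity
  nlinarith

end PercFormal

/-- The model `P` is positively associated with marginals `p` and
`P[A] = p²`, while `Q[A] = 2p³ − p⁵`; since `2q³ − q⁵ > q²` for `q ∈ ((√5−1)/2, 1)`,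
for such `p` we get `P[A] < Q[A]`, so `P` is not stochastically larger than `Q`. -/
theorem counterexample_outdegree_four
    (p : ℝ) (hp : p ∈ Set.Icc (0 : ℝ) 1) :
    PercFormal.PositivelyAssociated (PercFormal.P18 p) ∧
    (∀ j : Fin 4, PercFormal.P18 p {ω | ω j = true} = ENNReal.ofReal p) ∧
    PercFormal.P18 p PercFormal.A18 = ENNReal.ofReal (p ^ 2) ∧
    PercFormal.Q18 p PercFormal.A18 = ENNReal.ofReal (2 * p ^ 3 - p ^ 5) ∧
    (∀ q : ℝ, q ∈ Set.Ioo ((Real.sqrt 5 - 1) / 2) 1 → q ^ 2 < 2 * q ^ 3 - q ^ 5) ∧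
    (p ∈ Set.Ioo ((Real.sqrt 5 - 1) / 2) 1 →
      PercFormal.P18 p PercFormal.A18 < PercFormal.Q18 p PercFormal.A18) := by
  open PercFormal in
  refine ⟨positivelyAssociated_map_of_monotone _
      (fun x y => (Measure.prod_singleton_mul_prod_singleton _ _ x y).le) ?_,
    P18_setOf_eq_true hp.2, P18_A18 hp, Q18_A18 hp,
    fun q hq => sq_lt_two_mul_pow_three_sub_pow_five hq, fun hpA => ?_⟩
  · intro z z' hz j
    fin_cases j
    exacts [hz.1, hz.1, hz.2, hz.2]
  · have h := sq_lt_two_mul_pow_three_sub_pow_five hpA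
    rw [P18_A18 hp, Q18_A18 hp]
    exact (ENNReal.ofReal_lt_ofReal_iff (by nlinarith)).2 h
end
end
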